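/- arXiv:2007.14204 — 5 statements merged into one kernel-verified Lean document; each statement's English description precedes it below -/
import Mathlib

section
/- There exists a universal constant C > 0 such that the following holds. Let G=(V,E) be a finite simple unweighted graph on n ≥ 3 vertices with m = |E| ≥ 2 edges, let eps ∈ (0, 1/18], and let H be a (1±eps)-spectral sparsifier of G. Then the unweighted version hat{H} of H is a t-spanner of G for t = C * sqrt(m * log n); that is, for all u,v ∈ V, d_{hat H}(u,v) ≤ C * sqrt(m * log n) * d_G(u,v). -/
open scoped Classical
open Finset

/-- Laplacian quadratic form of a (weighted) graph:
`x ↦ ∑_{edges {u,v}} w(u,v) * (x u - x v)^2` (each edge counted once). -/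
noncomputable def lapQF {V : Type*} [Fintype V] (H : SimpleGraph V) (w : V → V → ℝ)
    (x : V → ℝ) : ℝ :=
  (1 / 2) * ∑ u : V, ∑ v : V, if H.Adj u v then w u v * (x u - x v) ^ 2 else 0

/-- Total weight of edges of `H` with one endpoint in `X` and the other in `Y`
(intended for disjoint `X`, `Y`). -/
noncomputable def cutWeight {V : Type*} [Fintype V] (H : SimpleGraph V) (w : V → V → ℝ)
    (X Y : Set V) : ℝ :=
  ∑ u : V, ∑ v : V, if u ∈ X ∧ v ∈ Y ∧ H.Adj u v then w u v else 0

/-- `H` (with positive symmetric weights `w`) is a `(1 ± eps)`-spectral sparsifier of the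
unweighted graph `G`. -/
def IsSpectralSparsifier {V : Type*} [Fintype V] (G H : SimpleGraph V) (w : V → V → ℝ)
    (eps : ℝ) : Prop :=
  H ≤ G ∧ (∀ u v, H.Adj u v → 0 < w u v) ∧ (∀ u v, w u v = w v u) ∧
    ∀ x : V → ℝ,
      (1 - eps) * lapQF H w x ≤ lapQF G (fun _ _ => 1) x ∧
        lapQF G (fun _ _ => 1) x ≤ (1 + eps) * lapQF H w x

/-- `H` (with positive symmetric weights `w`) is a `(1 ± eps)`-cut sparsifier of the
unweighted graph `G`. -/
def IsCutSparsifier {V : Type*} [Fintype V] (G H : SimpleGraph V) (w : V → V → ℝ)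
    (eps : ℝ) : Prop :=
  H ≤ G ∧ (∀ u v, H.Adj u v → 0 < w u v) ∧ (∀ u v, w u v = w v u) ∧
    ∀ S : Set V,
      (1 - eps) * cutWeight H w S Sᶜ ≤ cutWeight G (fun _ _ => 1) S Sᶜ ∧
        cutWeight G (fun _ _ => 1) S Sᶜ ≤ (1 + eps) * cutWeight H w S Sᶜ

/-- Effective resistance between `u` and `v` in the weighted graph `(H, w)`, via the
variational characterization `R_{u,v} = sup { (x u - x v)^2 / Q(x) : Q(x) > 0 }`. -/
noncomputable def effRes {V : Type*} [Fintype V] (H : SimpleGraph V) (w : V → V → ℝ)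
    (u v : V) : ℝ :=
  sSup {r : ℝ | ∃ x : V → ℝ, 0 < lapQF H w x ∧ r = (x u - x v) ^ 2 / lapQF H w x}


section Aux
variable {V : Type*} [Fintype V]

lemma lapQF_nonneg (H : SimpleGraph V) (w : V → V → ℝ)
    (hw : ∀ u v, H.Adj u v → 0 ≤ w u v) (x : V → ℝ) : 0 ≤ lapQF H w x := by
  apply mul_nonneg (by norm_num)
  refine Finset.sum_nonneg fun a _ => Finset.sum_nonneg fun b _ => ?_
  split_ifs with h
  · exact mul_nonneg (hw a b h) (sq_nonneg _)
  · exact le_rfl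

lemma edge_le_lapQF {G : SimpleGraph V} {u v : V} (h : G.Adj u v) (x : V → ℝ) :
    (x u - x v) ^ 2 ≤ lapQF G (fun _ _ => 1) x := by
  classical
  set f : V → V → ℝ := fun a b => if G.Adj a b then 1 * (x a - x b) ^ 2 else 0 with hf
  have hfnn : ∀ a b, 0 ≤ f a b := by
    intro a b; simp only [hf]; split_ifs <;> positivity
  have hgnn : ∀ a, 0 ≤ ∑ b, f a b := fun a => Finset.sum_nonneg fun b _ => hfnn a b
  have h1 : f u v ≤ ∑ b, f u b := Finset.single_le_sum (fun b _ => hfnn u b) (mem_univ v)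
  have h2 : f v u ≤ ∑ b, f v b := Finset.single_le_sum (fun b _ => hfnn v b) (mem_univ u)
  have h3 : (∑ b, f u b) + (∑ b, f v b) ≤ ∑ a, ∑ b, f a b := by
    have := Finset.sum_le_sum_of_subset_of_nonneg
      (Finset.subset_univ ({u, v} : Finset V)) (fun a _ _ => hgnn a)
    rwa [Finset.sum_pair h.ne] at this
  have huv : f u v = (x u - x v) ^ 2 := by simp [hf, h]
  have hvu : f v u = (x u - x v) ^ 2 := by
    simp only [hf, if_pos h.symm, one_mul]; ring
  have : 2 * (x u - x v) ^ 2 ≤ ∑ a, ∑ b, f a b := by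
    nlinarith [h1, h2, h3]
  simp only [lapQF]
  linarith

lemma sum_delta_sq {u v : V} (h : u ≠ v) :
    ∑ a : V, ((if u = a then (1:ℝ) else 0) - (if v = a then 1 else 0)) ^ 2 = 2 := by
  classical
  have : ∀ a : V, ((if u = a then (1:ℝ) else 0) - (if v = a then 1 else 0)) ^ 2
      = (if u = a then (1:ℝ) else 0) + (if v = a then 1 else 0) := by
    intro a
    by_cases hu : u = a <;> by_cases hv : v = a <;>
      simp_all
  rw [Finset.sum_congr rfl fun a _ => this a, Finset.sum_add_distrib]
  simp
  norm_num

end Aux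

section Aux2
variable {V : Type*} [Fintype V]

lemma lapQF_delta_sum (H : SimpleGraph V) (w : V → V → ℝ) :
    ∑ a : V, lapQF H w (fun z => if z = a then (1:ℝ) else 0)
      = ∑ p : V, ∑ q : V, if H.Adj p q then w p q else 0 := by
  classical
  have hswap : ∑ a : V, lapQF H w (fun z => if z = a then (1:ℝ) else 0)
      = (1/2) * ∑ p : V, ∑ q : V, ∑ a : V,
        (if H.Adj p q then w p q * ((if p = a then (1:ℝ) else 0) - (if q = a then 1 else 0)) ^ 2
          else 0) := by
    unfold lapQF
    rw [← Finset.mul_sum]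
    congr 1
    rw [Finset.sum_comm]
    exact Finset.sum_congr rfl fun p _ => Finset.sum_comm
  rw [hswap]
  have hinner : ∀ p q : V, ∑ a : V,
      (if H.Adj p q then w p q * ((if p = a then (1:ℝ) else 0) - (if q = a then 1 else 0)) ^ 2
        else 0) = if H.Adj p q then 2 * w p q else 0 := by
    intro p q
    by_cases hpq : H.Adj p q
    · simp only [if_pos hpq, ← Finset.mul_sum, sum_delta_sq hpq.ne]
      ring
    · simp [hpq]
  rw [Finset.sum_congr rfl fun p _ => Finset.sum_congr rfl fun q _ => hinner p q]
  rw [Finset.mul_sum]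
  refine Finset.sum_congr rfl fun p _ => ?_
  rw [Finset.mul_sum]
  refine Finset.sum_congr rfl fun q _ => ?_
  split_ifs <;> ring

lemma lapQF_G_delta_sum (G : SimpleGraph V) :
    ∑ a : V, lapQF G (fun _ _ => (1:ℝ)) (fun z => if z = a then (1:ℝ) else 0)
      = 2 * (G.edgeFinset.card : ℝ) := by
  classical
  rw [lapQF_delta_sum]
  have : ∀ p : V, ∑ q : V, (if G.Adj p q then (1:ℝ) else 0) = (G.degree p : ℝ) := by
    intro p
    rw [Finset.sum_boole]
    congr 1
    rw [SimpleGraph.degree]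
    congr 1
    ext q
    simp [SimpleGraph.neighborFinset, SimpleGraph.neighborSet]
    exact Set.mem_toFinset.symm
  rw [Finset.sum_congr rfl fun p _ => this p]
  rw [← Nat.cast_sum]
  rw [SimpleGraph.sum_degrees_eq_twice_card_edges]
  push_cast
  ring

end Aux2

/-- There is a universal constant `C > 0` such that for every finite simple
unweighted graph `G` on `n ≥ 3` vertices with `m ≥ 2` edges, every `eps ∈ (0, 1/18]` and every
`(1 ± eps)`-spectral sparsifier `H` of `G`, the unweighted version of `H` is a
`C * sqrt (m * log n)`-spanner of `G`. -/
theorem stmt1 :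
    ∃ C : ℝ, 0 < C ∧
      ∀ (V : Type) [Fintype V] (G H : SimpleGraph V) (w : V → V → ℝ) (eps : ℝ),
        3 ≤ Fintype.card V →
        2 ≤ G.edgeSet.ncard →
        0 < eps → eps ≤ 1 / 18 →
        IsSpectralSparsifier G H w eps →
        ∀ u v : V, G.Reachable u v →
          H.Reachable u v ∧
            (H.dist u v : ℝ) ≤
              C * Real.sqrt ((G.edgeSet.ncard : ℝ) * Real.log (Fintype.card V)) *
                (G.dist u v : ℝ) := by
  classical
  refine ⟨2, by norm_num, ?_⟩
  intro V _ G H w eps hn hm heps heps' hsp u v huv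
  obtain ⟨hle, hwpos, hwsymm, hQ⟩ := hsp
  set n : ℝ := (Fintype.card V : ℝ) with hndef
  set m : ℝ := (G.edgeSet.ncard : ℝ) with hmdef
  have hm2 : (2:ℝ) ≤ m := by rw [hmdef]; exact_mod_cast hm
  have hn3 : (3:ℝ) ≤ n := by rw [hndef]; exact_mod_cast hn
  have hlogn : 1 ≤ Real.log n := by
    rw [Real.le_log_iff_exp_le (by linarith)]
    calc Real.exp 1 ≤ 2.7182818286 := Real.exp_one_lt_d9.le
      _ ≤ 3 := by norm_num
      _ ≤ n := hn3
  have hmcard : m = (G.edgeFinset.card : ℝ) := by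
    rw [hmdef]
    norm_cast
    simp [Set.ncard_eq_toFinset_card', SimpleGraph.edgeFinset]
  set S : ℝ := ∑ p : V, ∑ q : V, if H.Adj p q then w p q else 0 with hSdef
  have hSnn : 0 ≤ S := by
    refine Finset.sum_nonneg fun p _ => Finset.sum_nonneg fun q _ => ?_
    split_ifs with h
    · exact (hwpos p q h).le
    · exact le_rfl
  have hQHnn : ∀ x, 0 ≤ lapQF H w x := lapQF_nonneg H w (fun a b h => (hwpos a b h).le)
  have hStotal : (1 - eps) * S ≤ 2 * m := by
    have h1 : ∀ a : V, (1-eps) * lapQF H w (fun z => if z = a then (1:ℝ) else 0)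
        ≤ lapQF G (fun _ _ => 1) (fun z => if z = a then (1:ℝ) else 0) :=
      fun a => (hQ _).1
    calc (1-eps) * S
        = ∑ a : V, (1-eps) * lapQF H w (fun z => if z = a then (1:ℝ) else 0) := by
          rw [← Finset.mul_sum, lapQF_delta_sum H w]
      _ ≤ ∑ a : V, lapQF G (fun _ _ => 1) (fun z => if z = a then (1:ℝ) else 0) :=
          Finset.sum_le_sum fun a _ => h1 a
      _ = 2 * m := by rw [lapQF_G_delta_sum G, hmcard]
  set B : ℝ := 2 * Real.sqrt (m * Real.log n) with hBdef
  have hBnn : 0 ≤ B := by positivity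
  have key : ∀ a b : V, G.Adj a b → H.Reachable a b ∧ (H.dist a b : ℝ) ≤ B := by
    intro a b hab
    have hreach : H.Reachable a b := by
      by_contra hnr
      set x : V → ℝ := fun z => if H.Reachable a z then 1 else 0 with hxdef
      have hQH0 : lapQF H w x = 0 := by
        have hz : ∀ p ∈ (Finset.univ : Finset V), ∑ q : V,
            (if H.Adj p q then w p q * (x p - x q) ^ 2 else 0) = 0 := by
          intro p _
          refine Finset.sum_eq_zero fun q _ => ?_
          by_cases hpq : H.Adj p q
          · have hiff : H.Reachable a p ↔ H.Reachable a q :=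
              ⟨fun h => h.trans hpq.reachable, fun h => h.trans hpq.symm.reachable⟩
            have hxeq : x p = x q := by
              simp only [hxdef]
              by_cases h1 : H.Reachable a p
              · rw [if_pos h1, if_pos (hiff.mp h1)]
              · rw [if_neg h1, if_neg fun h => h1 (hiff.mpr h)]
            simp [hpq, hxeq]
          · simp [hpq]
        unfold lapQF
        rw [Finset.sum_congr rfl hz]
        simp
      have h1 : (x a - x b) ^ 2 ≤ lapQF G (fun _ _ => 1) x := edge_le_lapQF hab x
      have h2 : lapQF G (fun _ _ => 1) x ≤ (1 + eps) * lapQF H w x := (hQ x).2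
      have hx : (x a - x b) ^ 2 = 1 := by
        simp only [hxdef]
        rw [if_pos (SimpleGraph.Reachable.refl a), if_neg hnr]
        norm_num
      rw [hQH0, mul_zero] at h2
      rw [hx] at h1
      linarith
    refine ⟨hreach, ?_⟩
    set k : ℕ := H.dist a b with hkdef
    set x : V → ℝ := fun z => ((min (H.dist a z) k : ℕ) : ℝ) with hxdef
    have hxa : x a = 0 := by simp [hxdef, SimpleGraph.dist_self]
    have hxb : x b = (k : ℝ) := by simp [hxdef]; exact hkdef.le
    have hlip : ∀ p q, H.Adj p q → (x p - x q) ^ 2 ≤ 1 := by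
      intro p q hpq
      by_cases hr : H.Reachable a p
      · have hrq : H.Reachable a q := hr.trans hpq.reachable
        have h1 : H.dist a q ≤ H.dist a p + 1 := by
          obtain ⟨p1, hp1⟩ := hr.exists_walk_length_eq_dist
          calc H.dist a q ≤ (p1.concat hpq).length := SimpleGraph.dist_le _
            _ = H.dist a p + 1 := by rw [SimpleGraph.Walk.length_concat, hp1]
        have h2 : H.dist a p ≤ H.dist a q + 1 := by
          obtain ⟨p1, hp1⟩ := hrq.exists_walk_length_eq_dist
          calc H.dist a p ≤ (p1.concat hpq.symm).length := SimpleGraph.dist_le _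
            _ = H.dist a q + 1 := by rw [SimpleGraph.Walk.length_concat, hp1]
        have hmin1 : min (H.dist a q) k ≤ min (H.dist a p) k + 1 := by omega
        have hmin2 : min (H.dist a p) k ≤ min (H.dist a q) k + 1 := by omega
        have hc1 : x q ≤ x p + 1 := by
          simp only [hxdef]; exact_mod_cast hmin1
        have hc2 : x p ≤ x q + 1 := by
          simp only [hxdef]; exact_mod_cast hmin2
        nlinarith
      · have hrq : ¬ H.Reachable a q := fun h => hr (h.trans hpq.symm.reachable)
        have hp0 : H.dist a p = 0 :=
          SimpleGraph.dist_eq_zero_iff_eq_or_not_reachable.mpr (Or.inr hr)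
        have hq0 : H.dist a q = 0 :=
          SimpleGraph.dist_eq_zero_iff_eq_or_not_reachable.mpr (Or.inr hrq)
        simp [hxdef, hp0, hq0]
    have hQHx : lapQF H w x ≤ (1/2) * S := by
      unfold lapQF
      rw [hSdef]
      refine mul_le_mul_of_nonneg_left ?_ (by norm_num)
      refine Finset.sum_le_sum fun p _ => Finset.sum_le_sum fun q _ => ?_
      split_ifs with hpq
      · nlinarith [hlip p q hpq, (hwpos p q hpq).le, sq_nonneg (x p - x q)]
      · exact le_rfl
    have h1 : (x a - x b) ^ 2 ≤ lapQF G (fun _ _ => 1) x := edge_le_lapQF hab x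
    have h2 : lapQF G (fun _ _ => 1) x ≤ (1 + eps) * lapQF H w x := (hQ x).2
    have hk2 : (k : ℝ) ^ 2 ≤ (1 + eps) * ((1/2) * S) := by
      have h3 : (1 + eps) * lapQF H w x ≤ (1 + eps) * ((1/2) * S) :=
        mul_le_mul_of_nonneg_left hQHx (by linarith)
      have hx2 : (x a - x b) ^ 2 = (k : ℝ) ^ 2 := by rw [hxa, hxb]; ring
      linarith [hx2 ▸ h1]
    have hk4 : (k : ℝ) ^ 2 ≤ 4 * (m * Real.log n) := by
      have hint1 : (0:ℝ) ≤ (1/18 - eps) * S := mul_nonneg (by linarith) hSnn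
      have hstep : (k : ℝ) ^ 2 ≤ (19/17) * m := by
        linarith only [hStotal, hk2, hint1]
      linarith only [hstep, hm2,
        mul_nonneg (by linarith only [hm2] : (0:ℝ) ≤ m)
          (by linarith only [hlogn] : 0 ≤ Real.log n - 1)]
    have hsqrt4 : Real.sqrt 4 = 2 := by
      rw [show (4:ℝ) = 2 ^ 2 by norm_num, Real.sqrt_sq (by norm_num)]
    have : (k : ℝ) ≤ Real.sqrt (4 * (m * Real.log n)) := Real.le_sqrt_of_sq_le hk4
    rwa [Real.sqrt_mul (by norm_num) _, hsqrt4] at this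
  have claim : ∀ (a b : V) (p : G.Walk a b),
      H.Reachable a b ∧ (H.dist a b : ℝ) ≤ B * p.length := by
    intro a b p
    induction p with
    | nil => exact ⟨SimpleGraph.Reachable.refl _, by simp⟩
    | @cons a c b h q ih =>
      obtain ⟨r1, d1⟩ := key _ _ h
      obtain ⟨r2, d2⟩ := ih
      refine ⟨r1.trans r2, ?_⟩
      have htri : H.dist a b ≤ H.dist a c + H.dist c b := by
        obtain ⟨p1, hp1⟩ := r1.exists_walk_length_eq_dist
        obtain ⟨p2, hp2⟩ := r2.exists_walk_length_eq_dist
        calc H.dist a b ≤ (p1.append p2).length := SimpleGraph.dist_le _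
          _ = H.dist a c + H.dist c b := by rw [SimpleGraph.Walk.length_append, hp1, hp2]
      calc (H.dist a b : ℝ) ≤ (H.dist a c : ℝ) + (H.dist c b : ℝ) := by exact_mod_cast htri
        _ ≤ B + B * q.length := add_le_add d1 d2
        _ = B * (q.length + 1) := by ring
        _ = B * (SimpleGraph.Walk.cons h q).length := by
            rw [SimpleGraph.Walk.length_cons]; push_cast; ring
  obtain ⟨p, hp⟩ := huv.exists_walk_length_eq_dist
  obtain ⟨hr, hd⟩ := claim u v p
  rw [hp] at hd
  exact ⟨hr, hd⟩
end

section
/- Let G=(V,E) be a finite simple unweighted graph, let eps ∈ (0,1), and let H=(V,E_H,w) be a (1±eps)-cut sparsifier of G. Let A_0, A_1, ..., A_s be a partition of V such that every edge of H joins two vertices lying in the same part A_i or in consecutive parts A_i and A_{i+1}. For 0 ≤ i ≤ s-1 set W_i^G = |E_G(A_i, A_{i+1})| (the number of G-edges between A_i and A_{i+1}) and W_i^H = w_H(A_i, A_{i+1}), and set W_{-1}^H = W_s^H = 0. Then for every 0 ≤ i ≤ s-1: W_i^H - eps*(W_{i-1}^H + W_i^H + W_{i+1}^H) ≤ W_i^G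 ≤ W_i^H + eps*(W_{i-1}^H + W_i^H + W_{i+1}^H). -/
open scoped Classical
open Finset

lemma if_split_aux (P R Q1 Q2 T : Prop) (c : ℝ)
    (H : T → P → ¬R → Q1 ∨ Q2) (H12 : ¬(Q1 ∧ Q2)) (H1 : Q1 → ¬R) (H2 : Q2 → ¬R) :
    (if P ∧ ¬R ∧ T then c else 0)
      = (if P ∧ Q1 ∧ T then c else 0) + (if P ∧ Q2 ∧ T then c else 0) := by
  split_ifs <;> first | ring1 | (exfalso; tauto)

set_option maxHeartbeats 2000000 in
lemma if_ie_aux (PX PY QX QY T : Prop) (c : ℝ) (HU : ¬(PX ∧ PY)) (HV : ¬(QX ∧ QY)) :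
    (if PX ∧ ¬QX ∧ T then c else 0) + (if PY ∧ ¬QY ∧ T then c else 0)
      = (if (PX ∨ PY) ∧ ¬(QX ∨ QY) ∧ T then c else 0)
        + ((if PX ∧ QY ∧ T then c else 0) + (if PY ∧ QX ∧ T then c else 0)) := by
  split_ifs <;> first | ring1 | (exfalso; tauto)

section helpers
variable {V : Type*} [Fintype V] (K : SimpleGraph V) (ω : V → V → ℝ)

lemma cutWeight_nonneg {X Y : Set V} (hw : ∀ u v, K.Adj u v → 0 < ω u v) :
    0 ≤ cutWeight K ω X Y :=
  Finset.sum_nonneg fun u _ => Finset.sum_nonneg fun v _ => by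
    split_ifs with h
    exacts [(hw u v h.2.2).le, le_rfl]

lemma cutWeight_eq_zero {X Y : Set V} (h : ∀ u v, K.Adj u v → ¬(u ∈ X ∧ v ∈ Y)) :
    cutWeight K ω X Y = 0 := by
  refine Finset.sum_eq_zero fun u _ => Finset.sum_eq_zero fun v _ => ?_
  rw [if_neg]
  rintro ⟨a, b, c⟩
  exact h u v c ⟨a, b⟩

lemma cutWeight_congr {X Y X' Y' : Set V}
    (h : ∀ u v, K.Adj u v → ((u ∈ X ∧ v ∈ Y) ↔ (u ∈ X' ∧ v ∈ Y'))) :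
    cutWeight K ω X Y = cutWeight K ω X' Y' := by
  refine Finset.sum_congr rfl fun u _ => Finset.sum_congr rfl fun v _ => ?_
  by_cases hA : K.Adj u v
  · by_cases h1 : u ∈ X ∧ v ∈ Y
    · rw [if_pos ⟨h1.1, h1.2, hA⟩, if_pos ⟨((h u v hA).mp h1).1, ((h u v hA).mp h1).2, hA⟩]
    · rw [if_neg, if_neg]
      · rintro ⟨a, b, _⟩; exact h1 ((h u v hA).mpr ⟨a, b⟩)
      · rintro ⟨a, b, _⟩; exact h1 ⟨a, b⟩
  · rw [if_neg (fun h' => hA h'.2.2), if_neg (fun h' => hA h'.2.2)]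

lemma cutWeight_comm (hω : ∀ u v, ω u v = ω v u) (X Y : Set V) :
    cutWeight K ω X Y = cutWeight K ω Y X := by
  unfold cutWeight
  rw [Finset.sum_comm]
  refine Finset.sum_congr rfl fun a _ => Finset.sum_congr rfl fun b _ => ?_
  have hiff : (b ∈ X ∧ a ∈ Y ∧ K.Adj b a) ↔ (a ∈ Y ∧ b ∈ X ∧ K.Adj a b) :=
    ⟨fun ⟨x, y, z⟩ => ⟨y, x, z.symm⟩, fun ⟨x, y, z⟩ => ⟨y, x, z.symm⟩⟩
  rw [if_congr hiff (hω b a) rfl]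

lemma cut_decomp (X Y1 Y2 : Set V)
    (h12 : ∀ v, ¬(v ∈ Y1 ∧ v ∈ Y2)) (h1 : ∀ v, v ∈ Y1 → v ∉ X) (h2 : ∀ v, v ∈ Y2 → v ∉ X)
    (h : ∀ u v, K.Adj u v → u ∈ X → v ∉ X → v ∈ Y1 ∨ v ∈ Y2) :
    cutWeight K ω X Xᶜ = cutWeight K ω X Y1 + cutWeight K ω X Y2 := by
  unfold cutWeight
  rw [← Finset.sum_add_distrib]
  refine Finset.sum_congr rfl fun u _ => ?_
  rw [← Finset.sum_add_distrib]
  refine Finset.sum_congr rfl fun v _ => ?_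
  simp only [Set.mem_compl_iff]
  exact if_split_aux _ _ _ _ _ _ (h u v) (h12 v) (h1 v) (h2 v)

lemma sum_sum_add (f g : V → V → ℝ) :
    (∑ u : V, ∑ v : V, f u v) + (∑ u : V, ∑ v : V, g u v)
      = ∑ u : V, ∑ v : V, (f u v + g u v) := by
  rw [← Finset.sum_add_distrib]
  exact Finset.sum_congr rfl fun u _ => (Finset.sum_add_distrib).symm

lemma cut_ie (hω : ∀ u v, ω u v = ω v u) (X Y : Set V) (hd : ∀ v, ¬(v ∈ X ∧ v ∈ Y)) :
    cutWeight K ω X Xᶜ + cutWeight K ω Y Yᶜ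
      = cutWeight K ω (X ∪ Y) (X ∪ Y)ᶜ + 2 * cutWeight K ω X Y := by
  have hc : 2 * cutWeight K ω X Y = cutWeight K ω X Y + cutWeight K ω Y X := by
    rw [two_mul, cutWeight_comm K ω hω X Y]
  rw [hc]
  unfold cutWeight
  rw [sum_sum_add, sum_sum_add, sum_sum_add]
  refine Finset.sum_congr rfl fun u _ => Finset.sum_congr rfl fun v _ => ?_
  simp only [Set.mem_compl_iff, Set.mem_union]
  exact if_ie_aux _ _ _ _ _ _ (hd u) (hd v)

end helpers

section main
variable {V : Type} [Fintype V]

theorem stmt3' (G H : SimpleGraph V) (w : V → V → ℝ) (eps : ℝ)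
    (heps0 : 0 < eps) (heps1 : eps < 1)
    (hle : H ≤ G) (hpos : ∀ u v, H.Adj u v → 0 < w u v) (hsymw : ∀ u v, w u v = w v u)
    (hcut : ∀ S : Set V,
      (1 - eps) * cutWeight H w S Sᶜ ≤ cutWeight G (fun _ _ => 1) S Sᶜ ∧
        cutWeight G (fun _ _ => 1) S Sᶜ ≤ (1 + eps) * cutWeight H w S Sᶜ)
    (s : ℕ) (A : ℕ → Set V)
    (hdisj : ∀ i j, i ≤ s → j ≤ s → i ≠ j → Disjoint (A i) (A j))
    (hcover : ∀ x : V, ∃ i, i ≤ s ∧ x ∈ A i)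
    (hedge : ∀ u v i j, H.Adj u v → i ≤ s → j ≤ s → u ∈ A i → v ∈ A j →
      i = j ∨ i + 1 = j ∨ j + 1 = i) :
    ∀ i < s,
      cutWeight H w (A i) (A (i + 1)) -
          eps * ((if i = 0 then 0 else cutWeight H w (A (i - 1)) (A i)) +
                 cutWeight H w (A i) (A (i + 1)) +
                 (if i + 1 < s then cutWeight H w (A (i + 1)) (A (i + 2)) else 0)) ≤
        cutWeight G (fun _ _ => 1) (A i) (A (i + 1)) ∧
      cutWeight G (fun _ _ => 1) (A i) (A (i + 1)) ≤
        cutWeight H w (A i) (A (i + 1)) +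
          eps * ((if i = 0 then 0 else cutWeight H w (A (i - 1)) (A i)) +
                 cutWeight H w (A i) (A (i + 1)) +
                 (if i + 1 < s then cutWeight H w (A (i + 1)) (A (i + 2)) else 0)) := by
  intro i hi
  have his : i ≤ s := Nat.le_of_lt hi
  have hi1 : i + 1 ≤ s := hi
  have hmem : ∀ {x : V} {j k : ℕ}, j ≤ s → k ≤ s → j ≠ k → x ∈ A j → x ∉ A k :=
    fun {x j k} hj hk hne hxj => Set.disjoint_left.mp (hdisj j k hj hk hne) hxj
  -- H cut of A i
  have hHi : cutWeight H w (A i) (A i)ᶜ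
      = (if i = 0 then 0 else cutWeight H w (A (i - 1)) (A i))
        + cutWeight H w (A i) (A (i + 1)) := by
    by_cases h0 : i = 0
    · rw [if_pos h0, zero_add,
        cut_decomp H w (A i) ∅ (A (i + 1)) (by simp) (by simp)
          (fun v hv => hmem hi1 his (by omega) hv)
          (fun u v hA hu hv => by
            obtain ⟨j, hjs, hvj⟩ := hcover v
            have hji : j ≠ i := fun h => hv (h ▸ hvj)
            rcases hedge u v i j hA his hjs hu hvj with h | h | h
            · exact absurd h.symm hji
            · exact Or.inr (by rwa [h])
            · omega),
        cutWeight_eq_zero H w (X := A i) (Y := (∅ : Set V)) (by simp), zero_add]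
    · rw [if_neg h0,
        cut_decomp H w (A i) (A (i - 1)) (A (i + 1))
          (fun v ⟨a, b⟩ => hmem (by omega) hi1 (by omega) a b)
          (fun v hv => hmem (by omega) his (by omega) hv)
          (fun v hv => hmem hi1 his (by omega) hv)
          (fun u v hA hu hv => by
            obtain ⟨j, hjs, hvj⟩ := hcover v
            have hji : j ≠ i := fun h => hv (h ▸ hvj)
            rcases hedge u v i j hA his hjs hu hvj with h | h | h
            · exact absurd h.symm hji
            · exact Or.inr (by rwa [h])
            · exact Or.inl (by rw [show i - 1 = j by omega]; exact hvj)),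
        cutWeight_comm H w hsymw (A i) (A (i - 1))]
  -- H cut of A (i+1)
  have hHj : cutWeight H w (A (i + 1)) (A (i + 1))ᶜ
      = cutWeight H w (A i) (A (i + 1))
        + (if i + 1 < s then cutWeight H w (A (i + 1)) (A (i + 2)) else 0) := by
    by_cases h1 : i + 1 < s
    · rw [if_pos h1,
        cut_decomp H w (A (i + 1)) (A i) (A (i + 2))
          (fun v ⟨a, b⟩ => hmem his (by omega) (by omega) a b)
          (fun v hv => hmem his hi1 (by omega) hv)
          (fun v hv => hmem (by omega) hi1 (by omega) hv)
          (fun u v hA hu hv => by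
            obtain ⟨j, hjs, hvj⟩ := hcover v
            have hji : j ≠ i + 1 := fun h => hv (h ▸ hvj)
            rcases hedge u v (i + 1) j hA hi1 hjs hu hvj with h | h | h
            · exact absurd h.symm hji
            · exact Or.inr (by rw [show i + 2 = j from h]; exact hvj)
            · exact Or.inl (by rw [show i = j by omega]; exact hvj)),
        cutWeight_comm H w hsymw (A (i + 1)) (A i)]
    · rw [if_neg h1, add_zero,
        cut_decomp H w (A (i + 1)) (A i) ∅ (by simp)
          (fun v hv => hmem his hi1 (by omega) hv) (by simp)
          (fun u v hA hu hv => by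
            obtain ⟨j, hjs, hvj⟩ := hcover v
            have hji : j ≠ i + 1 := fun h => hv (h ▸ hvj)
            rcases hedge u v (i + 1) j hA hi1 hjs hu hvj with h | h | h
            · exact absurd h.symm hji
            · omega
            · exact Or.inl (by rw [show i = j by omega]; exact hvj)),
        cutWeight_eq_zero H w (X := A (i + 1)) (Y := (∅ : Set V)) (by simp), add_zero,
        cutWeight_comm H w hsymw (A (i + 1)) (A i)]
  -- H cut of A i ∪ A (i+1)
  have hHu : cutWeight H w (A i ∪ A (i + 1)) (A i ∪ A (i + 1))ᶜ
      = (if i = 0 then 0 else cutWeight H w (A (i - 1)) (A i))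
        + (if i + 1 < s then cutWeight H w (A (i + 1)) (A (i + 2)) else 0) := by
    have hXP : ∀ v, v ∈ A (i - 1) → i ≠ 0 → v ∉ A i ∪ A (i + 1) := fun v hv h0 => by
      rintro (h | h)
      · exact hmem (by omega) his (by omega) hv h
      · exact hmem (by omega) hi1 (by omega) hv h
    have hXN : ∀ v, v ∈ A (i + 2) → i + 1 < s → v ∉ A i ∪ A (i + 1) := fun v hv h1 => by
      rintro (h | h)
      · exact hmem (by omega) his (by omega) hv h
      · exact hmem (by omega) hi1 (by omega) hv h
    have hdec : ∀ u v, H.Adj u v → u ∈ A i ∪ A (i + 1) → v ∉ A i ∪ A (i + 1) →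
        (i ≠ 0 ∧ v ∈ A (i - 1)) ∨ (i + 1 < s ∧ v ∈ A (i + 2)) := by
      intro u v hA hu hv
      obtain ⟨j, hjs, hvj⟩ := hcover v
      have hji : j ≠ i := fun h => hv (Or.inl (h ▸ hvj))
      have hji1 : j ≠ i + 1 := fun h => hv (Or.inr (h ▸ hvj))
      rcases hu with hu | hu
      · rcases hedge u v i j hA his hjs hu hvj with h | h | h
        · exact absurd h.symm hji
        · exact absurd h.symm hji1
        · exact Or.inl ⟨by omega, by rw [show i - 1 = j by omega]; exact hvj⟩
      · rcases hedge u v (i + 1) j hA hi1 hjs hu hvj with h | h | h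
        · exact absurd h.symm hji1
        · exact Or.inr ⟨by omega, by rw [show i + 2 = j from h]; exact hvj⟩
        · exact absurd (by omega : j = i) hji
    have hcongP : i ≠ 0 → cutWeight H w (A i ∪ A (i + 1)) (A (i - 1))
        = cutWeight H w (A i) (A (i - 1)) := fun h0 => by
      refine cutWeight_congr H w fun u v hA =>
        ⟨fun ⟨hu, hv⟩ => ?_, fun ⟨hu, hv⟩ => ⟨Or.inl hu, hv⟩⟩
      rcases hu with hu | hu
      · exact ⟨hu, hv⟩
      · rcases hedge u v (i + 1) (i - 1) hA hi1 (by omega) hu hv with h | h | h <;> omega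
    have hcongN : i + 1 < s → cutWeight H w (A i ∪ A (i + 1)) (A (i + 2))
        = cutWeight H w (A (i + 1)) (A (i + 2)) := fun h1 => by
      refine cutWeight_congr H w fun u v hA =>
        ⟨fun ⟨hu, hv⟩ => ?_, fun ⟨hu, hv⟩ => ⟨Or.inr hu, hv⟩⟩
      rcases hu with hu | hu
      · rcases hedge u v i (i + 2) hA his (by omega) hu hv with h | h | h <;> omega
      · exact ⟨hu, hv⟩
    by_cases h0 : i = 0 <;> by_cases h1 : i + 1 < s
    · rw [if_pos h0, if_pos h1, zero_add,
        cut_decomp H w (A i ∪ A (i + 1)) ∅ (A (i + 2)) (by simp) (by simp)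
          (fun v hv => hXN v hv h1)
          (fun u v hA hu hv => by
            rcases hdec u v hA hu hv with ⟨hne, _⟩ | ⟨_, hv'⟩
            · exact absurd h0 hne
            · exact Or.inr hv'),
        cutWeight_eq_zero H w (X := A i ∪ A (i + 1)) (Y := (∅ : Set V)) (by simp), zero_add,
        hcongN h1]
    · rw [if_pos h0, if_neg h1, zero_add,
        cut_decomp H w (A i ∪ A (i + 1)) ∅ ∅ (by simp) (by simp) (by simp)
          (fun u v hA hu hv => by
            rcases hdec u v hA hu hv with ⟨hne, _⟩ | ⟨hlt, _⟩
            · exact absurd h0 hne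
            · exact absurd hlt h1),
        cutWeight_eq_zero H w (X := A i ∪ A (i + 1)) (Y := (∅ : Set V)) (by simp), zero_add]
    · rw [if_neg h0, if_pos h1,
        cut_decomp H w (A i ∪ A (i + 1)) (A (i - 1)) (A (i + 2))
          (fun v ⟨a, b⟩ => hmem (by omega) (by omega) (by omega) a b)
          (fun v hv => hXP v hv h0) (fun v hv => hXN v hv h1)
          (fun u v hA hu hv => by
            rcases hdec u v hA hu hv with ⟨_, hv'⟩ | ⟨_, hv'⟩
            · exact Or.inl hv'
            · exact Or.inr hv'),
        hcongP h0, hcongN h1, cutWeight_comm H w hsymw (A i) (A (i - 1))]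
    · rw [if_neg h0, if_neg h1, add_zero,
        cut_decomp H w (A i ∪ A (i + 1)) (A (i - 1)) ∅ (by simp)
          (fun v hv => hXP v hv h0) (by simp)
          (fun u v hA hu hv => by
            rcases hdec u v hA hu hv with ⟨_, hv'⟩ | ⟨hlt, _⟩
            · exact Or.inl hv'
            · exact absurd hlt h1),
        cutWeight_eq_zero H w (X := A i ∪ A (i + 1)) (Y := (∅ : Set V)) (by simp), add_zero,
        hcongP h0, cutWeight_comm H w hsymw (A i) (A (i - 1))]
  -- nonnegativity
  have hWp0 : (0:ℝ) ≤ (if i = 0 then 0 else cutWeight H w (A (i - 1)) (A i)) := by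
    split_ifs
    exacts [le_rfl, cutWeight_nonneg H w hpos]
  have hWc0 : 0 ≤ cutWeight H w (A i) (A (i + 1)) := cutWeight_nonneg H w hpos
  have hWn0 : (0:ℝ) ≤ (if i + 1 < s then cutWeight H w (A (i + 1)) (A (i + 2)) else 0) := by
    split_ifs
    exacts [cutWeight_nonneg H w hpos, le_rfl]
  -- inclusion–exclusion for G
  have hIE := cut_ie G (fun _ _ => (1:ℝ)) (fun _ _ => rfl) (A i) (A (i + 1))
    (fun v ⟨a, b⟩ => hmem his hi1 (by omega) a b)
  obtain ⟨l1, u1⟩ := hcut (A i)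
  obtain ⟨l2, u2⟩ := hcut (A (i + 1))
  obtain ⟨l3, u3⟩ := hcut (A i ∪ A (i + 1))
  rw [hHi] at l1 u1
  rw [hHj] at l2 u2
  rw [hHu] at l3 u3
  constructor <;> linarith

end main


/-- Let `H` be a `(1 ± eps)`-cut sparsifier of the unweighted graph `G`, and
let `A 0, …, A s` be a partition of `V` such that every edge of `H` joins vertices in the same
or consecutive parts. With `W_i^G = |E_G(A i, A (i+1))|`, `W_i^H = w_H(A i, A (i+1))` and the
convention `W_{-1}^H = W_s^H = 0`, one has
`W_i^H - eps (W_{i-1}^H + W_i^H + W_{i+1}^H) ≤ W_i^G ≤ W_i^H + eps (W_{i-1}^H + W_i^H + W_{i+1}^H)`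
for every `0 ≤ i ≤ s - 1`. -/
theorem stmt3 (V : Type) [Fintype V] (G H : SimpleGraph V) (w : V → V → ℝ) (eps : ℝ)
    (heps0 : 0 < eps) (heps1 : eps < 1)
    (hsparse : IsCutSparsifier G H w eps)
    (s : ℕ) (A : ℕ → Set V)
    (hdisj : ∀ i j, i ≤ s → j ≤ s → i ≠ j → Disjoint (A i) (A j))
    (hcover : ∀ x : V, ∃ i, i ≤ s ∧ x ∈ A i)
    (hedge : ∀ u v i j, H.Adj u v → i ≤ s → j ≤ s → u ∈ A i → v ∈ A j →
      i = j ∨ i + 1 = j ∨ j + 1 = i) :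
    ∀ i < s,
      cutWeight H w (A i) (A (i + 1)) -
          eps * ((if i = 0 then 0 else cutWeight H w (A (i - 1)) (A i)) +
                 cutWeight H w (A i) (A (i + 1)) +
                 (if i + 1 < s then cutWeight H w (A (i + 1)) (A (i + 2)) else 0)) ≤
        cutWeight G (fun _ _ => 1) (A i) (A (i + 1)) ∧
      cutWeight G (fun _ _ => 1) (A i) (A (i + 1)) ≤
        cutWeight H w (A i) (A (i + 1)) +
          eps * ((if i = 0 then 0 else cutWeight H w (A (i - 1)) (A i)) +
                 cutWeight H w (A i) (A (i + 1)) +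
                 (if i + 1 < s then cutWeight H w (A (i + 1)) (A (i + 2)) else 0)) := by
  obtain ⟨hle, hpos, hsymw, hcut⟩ := hsparse
  exact stmt3' G H w eps heps0 heps1 hle hpos hsymw hcut s A hdisj hcover hedge
end

section
/- There exists a universal constant C > 0 such that the following holds. Let G=(V,E) be a finite simple unweighted graph on n ≥ 3 vertices, let eps ∈ (0, 1/18], let H be a (1±eps)-spectral sparsifier of G, and let t ≥ 1 be an integer. Then the number of edges {u,v} ∈ E with d_{hat H}(u,v) > t is at most C * n^3 * (log n)^2 / (t^3 * log(1/(6*eps))^2). -/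
open scoped Classical
open Finset

lemma aux_sum_indicator (τ p q : ℕ) (hp : p ≤ τ) (hq : q ≤ τ) :
    ∑ i ∈ Finset.range τ, ((if p ≤ i then (1:ℝ) else 0) - (if q ≤ i then 1 else 0))^2
      = ((max p q - min p q : ℕ) : ℝ) := by
  have h : ∀ i, ((if p ≤ i then (1:ℝ) else 0) - (if q ≤ i then 1 else 0))^2
      = if min p q ≤ i ∧ i < max p q then (1:ℝ) else 0 := by
    intro i
    by_cases h1 : p ≤ i <;> by_cases h2 : q ≤ i
    · rw [if_pos h1, if_pos h2, if_neg (by omega)]; ring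
    · rw [if_pos h1, if_neg h2, if_pos (by omega)]; ring
    · rw [if_neg h1, if_pos h2, if_pos (by omega)]; ring
    · rw [if_neg h1, if_neg h2, if_neg (by omega)]; ring
  rw [Finset.sum_congr rfl fun i _ => h i, Finset.sum_boole]
  have : Finset.filter (fun i => min p q ≤ i ∧ i < max p q) (Finset.range τ)
      = Finset.Ico (min p q) (max p q) := by
    ext j
    simp only [Finset.mem_filter, Finset.mem_range, Finset.mem_Ico]
    omega
  rw [this]
  simp [Nat.card_Ico]

lemma aux_cast_sq (p q : ℕ) : ((p:ℝ) - (q:ℝ))^2 = (((max p q - min p q : ℕ)):ℝ)^2 := by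
  rcases le_total p q with h | h
  · rw [max_eq_right h, min_eq_left h, Nat.cast_sub h]; try ring
  · rw [max_eq_left h, min_eq_right h, Nat.cast_sub h]; try ring

lemma aux_cast_abs (p q : ℕ) : ((max p q - min p q : ℕ):ℝ) = |(p:ℝ) - (q:ℝ)| := by
  rcases le_total p q with h | h
  · rw [max_eq_right h, min_eq_left h, Nat.cast_sub h, abs_of_nonpos (by
      simp [sub_nonpos]; exact_mod_cast h)]; try ring
  · rw [max_eq_left h, min_eq_right h, Nat.cast_sub h, abs_of_nonneg (by
      simp [sub_nonneg]; exact_mod_cast h)]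

lemma aux_abs_le_sq (p q : ℕ) : |(p:ℝ) - (q:ℝ)| ≤ ((p:ℝ) - (q:ℝ))^2 := by
  rcases eq_or_ne p q with h | h
  · simp [h]
  · have h1 : (1:ℝ) ≤ |(p:ℝ) - (q:ℝ)| := by
      rcases lt_or_gt_of_ne h with h' | h'
      · rw [abs_of_nonpos (by simp [sub_nonpos]; exact_mod_cast h'.le)]
        have : (p:ℝ) + 1 ≤ q := by exact_mod_cast h'
        linarith
      · rw [abs_of_nonneg (by simp [sub_nonneg]; exact_mod_cast h'.le)]
        have : (q:ℝ) + 1 ≤ p := by exact_mod_cast h'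
        linarith
    calc |(p:ℝ) - q| = 1 * |(p:ℝ) - q| := (one_mul _).symm
    _ ≤ |(p:ℝ) - q| * |(p:ℝ) - q| := by
        apply mul_le_mul_of_nonneg_right h1 (abs_nonneg _)
    _ = ((p:ℝ) - q)^2 := by rw [← abs_mul, abs_mul_self, ← sq]

lemma aux_take {V : Type} {G : SimpleGraph V} {a b : V} (p : G.Walk a b) :
    ∀ (i : ℕ), i ≤ p.length → ∃ q : G.Walk a (p.getVert i), q.length = i := by
  induction p with
  | nil =>
    intro i hi
    simp only [SimpleGraph.Walk.length_nil, Nat.le_zero] at hi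
    subst hi
    exact ⟨SimpleGraph.Walk.nil, rfl⟩
  | cons h p ih =>
    intro i hi
    cases i with
    | zero => exact ⟨(SimpleGraph.Walk.nil).copy rfl (p.cons h).getVert_zero.symm, rfl⟩
    | succ i =>
      obtain ⟨q, hq⟩ := ih i (by simpa using hi)
      exact ⟨SimpleGraph.Walk.cons h q, by simp [hq]⟩

lemma aux_drop {V : Type} {G : SimpleGraph V} {a b : V} (p : G.Walk a b) :
    ∀ (i : ℕ), i ≤ p.length → ∃ q : G.Walk (p.getVert i) b, q.length = p.length - i := by
  induction p with
  | nil =>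
    intro i hi
    simp only [SimpleGraph.Walk.length_nil, Nat.le_zero] at hi
    subst hi
    exact ⟨SimpleGraph.Walk.nil, rfl⟩
  | cons h p ih =>
    intro i hi
    cases i with
    | zero =>
      exact ⟨(p.cons h).copy (p.cons h).getVert_zero.symm rfl, by simp⟩
    | succ i =>
      obtain ⟨q, hq⟩ := ih i (by simpa using hi)
      exact ⟨q, by simpa using hq⟩

/-- truncated distance -/
noncomputable def ndist {V : Type} (H : SimpleGraph V) (c : V) (τ : ℕ) (z : V) : ℕ :=
  (H.edist c z ⊓ (τ : ℕ∞)).toNat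

lemma ndist_coe {V : Type} (H : SimpleGraph V) (c : V) (τ : ℕ) (z : V) :
    ((ndist H c τ z : ℕ∞)) = H.edist c z ⊓ (τ : ℕ∞) :=
  ENat.coe_toNat (by
    intro h
    have : (H.edist c z ⊓ (τ:ℕ∞)) ≤ (τ:ℕ∞) := inf_le_right
    rw [h] at this
    exact (ENat.coe_ne_top τ) (top_le_iff.mp this))

lemma ndist_le {V : Type} (H : SimpleGraph V) (c : V) (τ : ℕ) (z : V) :
    ndist H c τ z ≤ τ := by
  have h := ndist_coe H c τ z
  have : ((ndist H c τ z : ℕ∞)) ≤ (τ:ℕ∞) := by rw [h]; exact inf_le_right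
  exact_mod_cast this

lemma ndist_self {V : Type} (H : SimpleGraph V) (c : V) (τ : ℕ) : ndist H c τ c = 0 := by
  unfold ndist
  rw [SimpleGraph.edist_self]
  simp

lemma ndist_lip {V : Type} (H : SimpleGraph V) (c : V) (τ : ℕ) {a b : V} (hab : H.Adj a b) :
    ndist H c τ a ≤ ndist H c τ b + 1 := by
  have h1 : H.edist c a ≤ H.edist c b + 1 := by
    calc H.edist c a ≤ H.edist c b + H.edist b a := SimpleGraph.edist_triangle
    _ = H.edist c b + 1 := by rw [SimpleGraph.edist_eq_one_iff_adj.mpr hab.symm]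
  have h2 : ((ndist H c τ a : ℕ∞)) ≤ ((ndist H c τ b + 1 : ℕ) : ℕ∞) := by
    rw [ndist_coe, Nat.cast_add, Nat.cast_one, ndist_coe]
    rcases le_total (H.edist c b) (τ:ℕ∞) with h | h
    · rw [inf_eq_left.mpr h]
      exact le_trans inf_le_left h1
    · rw [inf_eq_right.mpr h]
      exact le_trans inf_le_right le_self_add
  exact_mod_cast h2

lemma aux_reach {V : Type} [Fintype V] (G H : SimpleGraph V) (w : V → V → ℝ) (eps : ℝ)
    (heps : 0 < eps)
    (hQ : ∀ x : V → ℝ,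
      (1 - eps) * lapQF H w x ≤ lapQF G (fun _ _ => 1) x ∧
        lapQF G (fun _ _ => 1) x ≤ (1 + eps) * lapQF H w x) :
    ∀ u v, G.Adj u v → H.Reachable u v := by
  intro u v huv
  by_contra hr
  set x : V → ℝ := fun z => if H.Reachable u z then 1 else 0 with hx
  have hH0 : lapQF H w x = 0 := by
    unfold lapQF
    rw [mul_eq_zero]; right
    apply Finset.sum_eq_zero; intro a _
    apply Finset.sum_eq_zero; intro b _
    by_cases hab : H.Adj a b
    · rw [if_pos hab]
      have hxab : x a = x b := by
        simp only [hx]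
        by_cases hua : H.Reachable u a
        · rw [if_pos hua, if_pos (hua.trans hab.reachable)]
        · rw [if_neg hua, if_neg (fun hub => hua (hub.trans hab.symm.reachable))]
      rw [hxab]; ring
    · rw [if_neg hab]
  have hterm : ∀ a b : V, (0:ℝ) ≤ if G.Adj a b then 1 * (x a - x b)^2 else 0 := by
    intro a b; split_ifs
    · positivity
    · exact le_refl 0
  have hxu : x u = 1 := by simp only [hx]; rw [if_pos (SimpleGraph.Reachable.refl u)]
  have hxv : x v = 0 := by simp only [hx]; rw [if_neg hr]
  have hinner : ∀ a : V, (0:ℝ) ≤ ∑ b : V, if G.Adj a b then 1 * (x a - x b)^2 else 0 :=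
    fun a => Finset.sum_nonneg (fun b _ => hterm a b)
  have hrow_u : (1:ℝ) ≤ ∑ b : V, if G.Adj u b then 1 * (x u - x b)^2 else 0 := by
    have h1 : (if G.Adj u v then 1 * (x u - x v)^2 else 0) ≤ ∑ b : V, if G.Adj u b then 1 * (x u - x b)^2 else 0 :=
      Finset.single_le_sum (fun b _ => hterm u b) (Finset.mem_univ v)
    rw [if_pos huv] at h1
    calc (1:ℝ) = 1 * (x u - x v)^2 := by rw [hxu, hxv]; norm_num
    _ ≤ _ := h1
  have hG1 : (1/2 : ℝ) ≤ lapQF G (fun _ _ => 1) x := by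
    unfold lapQF
    have h2 : (∑ b : V, if G.Adj u b then 1 * (x u - x b)^2 else 0)
        ≤ ∑ a : V, ∑ b : V, if G.Adj a b then 1 * (x a - x b)^2 else 0 :=
      Finset.single_le_sum (fun a _ => hinner a) (Finset.mem_univ u)
    nlinarith [le_trans hrow_u h2]
  have hfin := (hQ x).2
  rw [hH0] at hfin
  nlinarith

lemma aux_core {V : Type} [Fintype V] (G H : SimpleGraph V) (w : V → V → ℝ) (eps : ℝ)
    (heps : 0 < eps) (heps1 : eps < 1)
    (hQ : ∀ x : V → ℝ,
      (1 - eps) * lapQF H w x ≤ lapQF G (fun _ _ => 1) x ∧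
        lapQF G (fun _ _ => 1) x ≤ (1 + eps) * lapQF H w x)
    (c : V) (τ : ℕ) :
    lapQF G (fun _ _ => 1) (fun z => (ndist H c τ z : ℝ))
      ≤ ((1+eps)/(1-eps)) *
        ((1/2) * ∑ u : V, ∑ v : V,
          if G.Adj u v then |(ndist H c τ u : ℝ) - (ndist H c τ v : ℝ)| else 0) := by
  set nd : V → ℕ := ndist H c τ with hnd
  set χ : ℕ → V → ℝ := fun i z => if nd z ≤ i then 1 else 0 with hχ
  have hswap : ∀ (F : SimpleGraph V) (ω : V → V → ℝ),
      ∑ i ∈ Finset.range τ, lapQF F ω (χ i)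
      = (1/2) * ∑ u : V, ∑ v : V,
          if F.Adj u v then ω u v * ((max (nd u) (nd v) - min (nd u) (nd v) : ℕ):ℝ) else 0 := by
    intro F ω
    unfold lapQF
    rw [← Finset.mul_sum]
    congr 1
    rw [Finset.sum_comm]
    refine Finset.sum_congr rfl fun u _ => ?_
    rw [Finset.sum_comm]
    refine Finset.sum_congr rfl fun v _ => ?_
    by_cases hadj : F.Adj u v
    · simp only [if_pos hadj]
      rw [← Finset.mul_sum]
      rw [aux_sum_indicator τ (nd u) (nd v) (ndist_le H c τ u) (ndist_le H c τ v)]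
    · simp only [if_neg hadj, Finset.sum_const_zero]
  have hA : lapQF H w (fun z => (nd z : ℝ)) = ∑ i ∈ Finset.range τ, lapQF H w (χ i) := by
    rw [hswap H w]
    unfold lapQF
    congr 1
    refine Finset.sum_congr rfl fun u _ => Finset.sum_congr rfl fun v _ => ?_
    by_cases hadj : H.Adj u v
    · rw [if_pos hadj, if_pos hadj]
      congr 1
      rw [aux_cast_sq (nd u) (nd v)]
      have hd : max (nd u) (nd v) - min (nd u) (nd v) ≤ 1 := by
        have h1 := ndist_lip H c τ hadj
        have h2 := ndist_lip H c τ hadj.symm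
        simp only [← hnd] at h1 h2
        omega
      have : max (nd u) (nd v) - min (nd u) (nd v) = 0 ∨
          max (nd u) (nd v) - min (nd u) (nd v) = 1 := by omega
      rcases this with h | h <;> rw [h] <;> norm_num
    · rw [if_neg hadj, if_neg hadj]
  have hB : ∑ i ∈ Finset.range τ, lapQF G (fun _ _ => 1) (χ i)
      = (1/2) * ∑ u : V, ∑ v : V,
          if G.Adj u v then |(nd u : ℝ) - (nd v : ℝ)| else 0 := by
    rw [hswap G (fun _ _ => 1)]
    congr 1
    refine Finset.sum_congr rfl fun u _ => Finset.sum_congr rfl fun v _ => ?_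
    by_cases hadj : G.Adj u v
    · rw [if_pos hadj, if_pos hadj, one_mul, aux_cast_abs]
    · rw [if_neg hadj, if_neg hadj]
  have h1e : (0:ℝ) < 1 - eps := by linarith
  have hstep : ∀ i ∈ Finset.range τ,
      lapQF H w (χ i) ≤ lapQF G (fun _ _ => 1) (χ i) / (1 - eps) := by
    intro i _
    rw [le_div_iff₀ h1e, mul_comm]
    exact (hQ (χ i)).1
  calc lapQF G (fun _ _ => 1) (fun z => (nd z : ℝ))
      ≤ (1+eps) * lapQF H w (fun z => (nd z : ℝ)) := (hQ _).2
    _ = (1+eps) * ∑ i ∈ Finset.range τ, lapQF H w (χ i) := by rw [hA]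
    _ ≤ (1+eps) * ∑ i ∈ Finset.range τ, (lapQF G (fun _ _ => 1) (χ i) / (1 - eps)) := by
        apply mul_le_mul_of_nonneg_left (Finset.sum_le_sum hstep) (by linarith)
    _ = ((1+eps)/(1-eps)) * ∑ i ∈ Finset.range τ, lapQF G (fun _ _ => 1) (χ i) := by
        rw [← Finset.sum_div]; ring
    _ = _ := by rw [hB]

lemma aux_eps {V : Type} [Fintype V] (G H : SimpleGraph V) (w : V → V → ℝ) (eps : ℝ)
    (heps : 0 < eps) (heps2 : eps ≤ 1/18)
    (hQ : ∀ x : V → ℝ,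
      (1 - eps) * lapQF H w x ≤ lapQF G (fun _ _ => 1) x ∧
        lapQF G (fun _ _ => 1) x ≤ (1 + eps) * lapQF H w x)
    (u0 v0 : V) (hadj : G.Adj u0 v0) (hgt : (1:ℕ∞) < H.edist u0 v0) :
    1/(6*eps) ≤ (Fintype.card V : ℝ)^2 := by
  have heps1 : eps < 1 := by linarith
  have h1e : (0:ℝ) < 1 - eps := by linarith
  set n : ℝ := (Fintype.card V : ℝ) with hn
  set nd : V → ℕ := ndist H u0 2 with hnd
  have h0 : nd u0 = 0 := ndist_self H u0 2
  have h2v : nd v0 = 2 := by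
    have h2le : (2:ℕ∞) ≤ H.edist u0 v0 := by
      have := Order.add_one_le_of_lt hgt
      simpa [one_add_one_eq_two] using this
    have : ((nd v0 : ℕ∞)) = (2:ℕ∞) := by
      rw [hnd, ndist_coe]
      rw [inf_eq_right.mpr (by exact_mod_cast h2le)]
      norm_num
    exact_mod_cast this
  set M : ℝ := (1/2) * ∑ u : V, ∑ v : V,
      (if G.Adj u v then |(nd u : ℝ) - (nd v : ℝ)| else 0) with hM
  set Q : ℝ := lapQF G (fun _ _ => 1) (fun z => (nd z : ℝ)) with hQdef
  have hcore : Q ≤ ((1+eps)/(1-eps)) * M := aux_core G H w eps heps heps1 hQ u0 2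
  -- lower bound: M + 2 ≤ Q
  have hQM : M + 2 ≤ Q := by
    set g : V → V → ℝ := fun a b =>
      (if G.Adj a b then ((nd a : ℝ) - (nd b : ℝ))^2 - |(nd a : ℝ) - (nd b : ℝ)| else 0) with hg
    have hgnn : ∀ a b, 0 ≤ g a b := by
      intro a b
      simp only [hg]
      split_ifs
      · have := aux_abs_le_sq (nd a) (nd b); linarith
      · exact le_refl 0
    have hrownn : ∀ a, 0 ≤ ∑ b : V, g a b := fun a => Finset.sum_nonneg fun b _ => hgnn a b
    have hguv : g u0 v0 = 2 := by
      simp only [hg, if_pos hadj, h0, h2v]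
      norm_num
    have hgvu : g v0 u0 = 2 := by
      simp only [hg, if_pos hadj.symm, h0, h2v]
      norm_num
    have hrow_u : (2:ℝ) ≤ ∑ b : V, g u0 b := by
      have := Finset.single_le_sum (fun b _ => hgnn u0 b) (Finset.mem_univ v0)
      rw [hguv] at this; exact this
    have hrow_v : (2:ℝ) ≤ ∑ b : V, g v0 b := by
      have := Finset.single_le_sum (fun b _ => hgnn v0 b) (Finset.mem_univ u0)
      rw [hgvu] at this; exact this
    have hsum4 : (4:ℝ) ≤ ∑ a : V, ∑ b : V, g a b := by
      rw [← Finset.add_sum_erase Finset.univ (fun a => ∑ b : V, g a b) (Finset.mem_univ u0)]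
      have hv0mem : v0 ∈ Finset.univ.erase u0 :=
        Finset.mem_erase.mpr ⟨hadj.ne', Finset.mem_univ v0⟩
      have := Finset.single_le_sum (fun a (_ : a ∈ Finset.univ.erase u0) => hrownn a) hv0mem
      linarith
    have hsplit : Q - M = (1/2) * ∑ a : V, ∑ b : V, g a b := by
      rw [hQdef, hM]
      unfold lapQF
      rw [← mul_sub, ← Finset.sum_sub_distrib]
      congr 1
      refine Finset.sum_congr rfl fun a _ => ?_
      rw [← Finset.sum_sub_distrib]
      refine Finset.sum_congr rfl fun b _ => ?_
      simp only [hg]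
      split_ifs
      · ring
      · ring
    linarith
  -- upper bound on M
  have hMn : M ≤ n^2 := by
    have hterm : ∀ a b : V, (if G.Adj a b then |(nd a : ℝ) - (nd b : ℝ)| else 0) ≤ 2 := by
      intro a b
      split_ifs
      · have ha := ndist_le H u0 2 a
        have hb := ndist_le H u0 2 b
        rw [abs_le]
        constructor
        · have : (nd a : ℝ) ≥ 0 := Nat.cast_nonneg _
          have : (nd b : ℝ) ≤ 2 := by exact_mod_cast hb
          have : (nd a : ℝ) ≥ 0 := Nat.cast_nonneg _
          push_cast
          have h1 : (nd a : ℝ) ≥ 0 := Nat.cast_nonneg _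
          have h2 : (nd b : ℝ) ≤ 2 := by exact_mod_cast hb
          linarith
        · have h1 : (nd a : ℝ) ≤ 2 := by exact_mod_cast ha
          have h2 : (nd b : ℝ) ≥ 0 := Nat.cast_nonneg _
          linarith
      · norm_num
    have : ∑ a : V, ∑ b : V, (if G.Adj a b then |(nd a : ℝ) - (nd b : ℝ)| else 0)
        ≤ ∑ a : V, ∑ b : V, (2:ℝ) := by
      apply Finset.sum_le_sum fun a _ => Finset.sum_le_sum fun b _ => hterm a b
    rw [hM]
    have hcount : ∑ a : V, ∑ b : V, (2:ℝ) = 2 * n^2 := by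
      rw [Finset.sum_const, Finset.sum_const, Finset.card_univ]
      push_cast [hn]
      ring
    rw [hcount] at this
    linarith
  -- combine
  have hdiv : (M + 2) * (1 - eps) ≤ (1+eps) * M := by
    have h := le_trans hQM hcore
    rw [div_mul_eq_mul_div, le_div_iff₀ h1e] at h
    linarith
  rw [div_le_iff₀ (by positivity)]
  nlinarith [mul_le_mul_of_nonneg_left hMn (le_of_lt heps)]

lemma aux_ball {V : Type} [Fintype V] (H : SimpleGraph V) (c v : V) (r t : ℕ) (hrt : r ≤ t)
    (hfar : (t:ℕ∞) < H.edist c v) (hne : H.edist c v ≠ ⊤) :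
    r + 1 ≤ (Finset.univ.filter (fun z => H.edist c z ≤ (r:ℕ∞))).card := by
  obtain ⟨p, hp⟩ := SimpleGraph.exists_walk_of_edist_ne_top hne
  have hlen : t < p.length := by
    have : (t:ℕ∞) < (p.length : ℕ∞) := by rw [hp]; exact hfar
    exact_mod_cast this
  have hexact : ∀ i, i ≤ r → H.edist c (p.getVert i) = (i:ℕ∞) := by
    intro i hi
    have hile : i ≤ p.length := by omega
    obtain ⟨q1, hq1⟩ := aux_take p i hile
    obtain ⟨q2, hq2⟩ := aux_drop p i hile
    have hle : H.edist c (p.getVert i) ≤ (i:ℕ∞) := by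
      have := SimpleGraph.edist_le q1
      rwa [hq1] at this
    have hge : (i:ℕ∞) ≤ H.edist c (p.getVert i) := by
      by_contra hcon
      push_neg at hcon
      have h2 : H.edist (p.getVert i) v ≤ ((p.length - i : ℕ) : ℕ∞) := by
        have := SimpleGraph.edist_le q2
        rwa [hq2] at this
      have h3 : (p.length : ℕ∞) ≤ H.edist c (p.getVert i) + ((p.length - i : ℕ) : ℕ∞) := by
        calc (p.length : ℕ∞) = H.edist c v := hp
        _ ≤ H.edist c (p.getVert i) + H.edist (p.getVert i) v := SimpleGraph.edist_triangle
        _ ≤ H.edist c (p.getVert i) + ((p.length - i : ℕ) : ℕ∞) := add_le_add_right h2 _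
      set m : ℕ := (H.edist c (p.getVert i)).toNat with hm
      have hmtop : H.edist c (p.getVert i) ≠ ⊤ := by
        intro habs; rw [habs] at hcon; exact (not_top_lt hcon)
      have hmcoe : ((m:ℕ∞)) = H.edist c (p.getVert i) := ENat.coe_toNat hmtop
      have hmi : m < i := by
        have : ((m:ℕ∞)) < (i:ℕ∞) := by rw [hmcoe]; exact hcon
        exact_mod_cast this
      rw [← hmcoe] at h3
      have h4 : (p.length : ℕ) ≤ m + (p.length - i) := by
        have : ((p.length : ℕ):ℕ∞) ≤ ((m + (p.length - i) : ℕ) : ℕ∞) := by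
          push_cast
          exact h3
        exact_mod_cast this
      omega
    exact le_antisymm hle hge
  have hmaps : ∀ i ∈ Finset.range (r+1),
      p.getVert i ∈ Finset.univ.filter (fun z => H.edist c z ≤ (r:ℕ∞)) := by
    intro i hi
    rw [Finset.mem_range] at hi
    rw [Finset.mem_filter]
    refine ⟨Finset.mem_univ _, ?_⟩
    rw [hexact i (by omega)]
    exact_mod_cast Nat.lt_succ_iff.mp hi
  have hinj : Set.InjOn p.getVert (Finset.range (r+1)) := by
    intro i hi j hj hij
    simp only [Finset.coe_range, Set.mem_Iio] at hi hj
    have h1 := hexact i (by omega)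
    have h2 := hexact j (by omega)
    rw [hij] at h1
    rw [h1] at h2
    exact_mod_cast h2
  have := Finset.card_le_card_of_injOn p.getVert hmaps hinj
  simpa using this

set_option maxHeartbeats 2000000 in
/-- There is a universal constant `C > 0` such that for every `n ≥ 3`-vertex
unweighted graph `G`, every `eps ∈ (0, 1/18]`, every `(1 ± eps)`-spectral sparsifier `H` of
`G`, and every integer `t ≥ 1`, the number of edges `{u,v}` of `G` with
`d_{Ĥ}(u,v) > t` is at most `C * n^3 * (log n)^2 / (t^3 * log (1/(6 eps))^2)`. -/
theorem stmt8 :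
    ∃ C : ℝ, 0 < C ∧
      ∀ (V : Type) [Fintype V] (G H : SimpleGraph V) (w : V → V → ℝ) (eps : ℝ) (t : ℕ),
        3 ≤ Fintype.card V →
        0 < eps → eps ≤ 1 / 18 →
        IsSpectralSparsifier G H w eps →
        1 ≤ t →
        (({e ∈ G.edgeSet | ∀ u v : V, e = s(u, v) → (t : ℕ∞) < H.edist u v}.ncard : ℝ)) ≤
          C * (Fintype.card V : ℝ) ^ 3 * (Real.log (Fintype.card V)) ^ 2 /
            ((t : ℝ) ^ 3 * (Real.log (1 / (6 * eps))) ^ 2) := by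
  classical
  refine ⟨1000, by norm_num, ?_⟩
  intro V _ G H w eps t hn heps heps2 hsp ht
  obtain ⟨hHG, hwpos, hwsym, hQ⟩ := hsp
  set n : ℝ := (Fintype.card V : ℝ) with hn'
  have hn3 : (3:ℝ) ≤ n := by rw [hn']; exact_mod_cast hn
  set L : ℝ := Real.log (1/(6*eps)) with hL
  have heps1 : eps < 1 := by linarith
  have h1e : (0:ℝ) < 1 - eps := by linarith
  have h6e : (0:ℝ) < 6 * eps := by linarith
  have hL3 : (3:ℝ) ≤ 1/(6*eps) := by rw [le_div_iff₀ h6e]; linarith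
  have hLpos : 0 < L := by rw [hL]; apply Real.log_pos; linarith
  have hlogn : 0 < Real.log n := Real.log_pos (by linarith)
  have ht1 : (1:ℝ) ≤ (t:ℝ) := by exact_mod_cast ht
  have htR : (0:ℝ) < (t:ℝ) := by linarith
  have hden : (0:ℝ) < (t:ℝ)^3 * L^2 := by positivity
  set Sfin : Finset (Sym2 V) := Finset.univ.filter
    (fun e => e ∈ G.edgeSet ∧ ∀ u v : V, e = s(u,v) → (t:ℕ∞) < H.edist u v) with hSfin
  have hset : {e ∈ G.edgeSet | ∀ u v : V, e = s(u, v) → (t : ℕ∞) < H.edist u v} = ↑Sfin := by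
    ext e
    simp [hSfin, Set.mem_setOf_eq]
  rw [hset, Set.ncard_coe_finset]
  rcases Finset.eq_empty_or_nonempty Sfin with hSe | hSne
  · rw [hSe]
    simp only [Finset.card_empty, Nat.cast_zero]
    positivity
  obtain ⟨e0, he0⟩ := hSne
  have hrep0 : ∃ u v : V, e0 = s(u,v) := by
    induction e0 using Sym2.ind with
    | _ a b => exact ⟨a, b, rfl⟩
  obtain ⟨u0, v0, he0eq⟩ := hrep0
  have he0P := (Finset.mem_filter.mp he0).2
  have hadj0 : G.Adj u0 v0 := by
    have h := he0P.1
    rw [he0eq] at h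
    exact (SimpleGraph.mem_edgeSet G).mp h
  have hfar0 : (t:ℕ∞) < H.edist u0 v0 := he0P.2 u0 v0 he0eq
  have hgt1 : (1:ℕ∞) < H.edist u0 v0 :=
    lt_of_le_of_lt (by exact_mod_cast ht : (1:ℕ∞) ≤ (t:ℕ∞)) hfar0
  have heps_lb := aux_eps G H w eps heps heps2 hQ u0 v0 hadj0 hgt1
  have hLn : L ≤ 2 * Real.log n := by
    rw [hL]
    calc Real.log (1/(6*eps)) ≤ Real.log (n^2) :=
          Real.log_le_log (by positivity) heps_lb
    _ = 2 * Real.log n := by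
          rw [Real.log_pow]; norm_num
  -- hubs
  set s' : ℕ := t/4 with hs'
  set r : ℕ := t/8 with hr
  set active : V → Prop := fun c => ∃ vv, G.Adj c vv ∧ (t:ℕ∞) < H.edist c vv with hactive
  set Fam : Finset (Finset V) := Finset.univ.filter
    (fun T => (∀ a ∈ T, active a) ∧ ∀ a ∈ T, ∀ b ∈ T, a ≠ b → (s':ℕ∞) < H.edist a b)
    with hFam
  have hFamne : Fam.Nonempty := ⟨∅, by simp [hFam]⟩
  obtain ⟨T, hTFam, hTmax⟩ := Finset.exists_max_image Fam Finset.card hFamne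
  obtain ⟨hTact, hTsep⟩ := (Finset.mem_filter.mp hTFam).2
  have hcover : ∀ u, active u → ∃ c ∈ T, H.edist c u ≤ (s':ℕ∞) := by
    intro u hu
    by_contra hc
    push_neg at hc
    have huT : u ∉ T := by
      intro huT
      have h := hc u huT
      rw [SimpleGraph.edist_self] at h
      simp at h
    have hins : insert u T ∈ Fam := by
      rw [hFam, Finset.mem_filter]
      refine ⟨Finset.mem_univ _, ⟨?_, ?_⟩⟩
      · intro a ha
        rcases Finset.mem_insert.mp ha with rfl | ha'
        · exact hu
        · exact hTact a ha'
      · intro a ha b hb hab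
        rcases Finset.mem_insert.mp ha with rfl | ha' <;>
          rcases Finset.mem_insert.mp hb with h' | hb'
        · exact absurd h'.symm hab
        · rw [SimpleGraph.edist_comm]; exact hc b hb'
        · subst h'; exact hc a ha'
        · exact hTsep a ha' b hb' hab
    have hcard := hTmax _ hins
    rw [Finset.card_insert_of_notMem huT] at hcard
    omega
  -- packing bound
  have hTcard : (T.card : ℝ) * (t:ℝ) ≤ 8 * n := by
    set ball : V → Finset V := fun c => Finset.univ.filter (fun z => H.edist c z ≤ (r:ℕ∞))
      with hball
    have hballcard : ∀ c ∈ T, r + 1 ≤ (ball c).card := by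
      intro c hc
      obtain ⟨vc, hadjc, hfarc⟩ := hTact c hc
      have hreachc := aux_reach G H w eps heps hQ c vc hadjc
      have hnec : H.edist c vc ≠ ⊤ := SimpleGraph.edist_ne_top_iff_reachable.mpr hreachc
      exact aux_ball H c vc r t (by omega) hfarc hnec
    have hdisj : ∀ a ∈ T, ∀ b ∈ T, a ≠ b → Disjoint (ball a) (ball b) := by
      intro a ha b hb hab
      rw [Finset.disjoint_left]
      intro z hza hzb
      rw [hball, Finset.mem_filter] at hza hzb
      have htri : H.edist a b ≤ ((2*r : ℕ) : ℕ∞) := by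
        calc H.edist a b ≤ H.edist a z + H.edist z b := SimpleGraph.edist_triangle
        _ = H.edist a z + H.edist b z := by rw [SimpleGraph.edist_comm (u := z) (v := b)]
        _ ≤ (r:ℕ∞) + (r:ℕ∞) := add_le_add hza.2 hzb.2
        _ = ((2*r : ℕ) : ℕ∞) := by push_cast; ring
      have hsep := hTsep a ha b hb hab
      have h2rs : ((2*r : ℕ) : ℕ∞) ≤ (s':ℕ∞) := by
        have : 2*r ≤ s' := by omega
        exact_mod_cast this
      exact absurd (lt_of_lt_of_le hsep (le_trans htri h2rs)) (lt_irrefl _)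
    have h1 : T.card * (r+1) ≤ Fintype.card V := by
      calc T.card * (r+1) = T.card • (r+1) := by rw [smul_eq_mul]
      _ ≤ ∑ c ∈ T, (ball c).card := Finset.card_nsmul_le_sum T _ _ hballcard
      _ = (T.biUnion ball).card := (Finset.card_biUnion hdisj).symm
      _ ≤ Fintype.card V := by
          rw [← Finset.card_univ]
          exact Finset.card_le_card (Finset.subset_univ _)
    have h2 : (t:ℝ) ≤ 8*((r:ℝ)+1) := by
      have : t ≤ 8*(r+1) := by omega
      exact_mod_cast this
    have h3 : (T.card:ℝ)*((r:ℝ)+1) ≤ n := by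
      rw [hn']
      exact_mod_cast h1
    nlinarith [Nat.cast_nonneg (α := ℝ) T.card]
  -- per-hub sets
  have hNeV : Nonempty V := Fintype.card_pos_iff.mp (by omega)
  set Sc : V → Finset (Sym2 V) := fun c => Sfin.filter
    (fun e => ∃ a b : V, e = s(a,b) ∧ H.edist c a ≤ (s':ℕ∞)) with hSc
  have hcoverS : Sfin ⊆ T.biUnion Sc := by
    intro e he
    have heP := (Finset.mem_filter.mp he).2
    have hrep : ∃ a b : V, e = s(a,b) := by
      induction e using Sym2.ind with | _ a b => exact ⟨a,b,rfl⟩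
    obtain ⟨a, b, heq⟩ := hrep
    have hadj : G.Adj a b := by
      have h := heP.1
      rw [heq] at h
      exact (SimpleGraph.mem_edgeSet G).mp h
    have hact : active a := ⟨b, hadj, heP.2 a b heq⟩
    obtain ⟨c, hcT, hcd⟩ := hcover a hact
    rw [Finset.mem_biUnion]
    exact ⟨c, hcT, Finset.mem_filter.mpr ⟨he, a, b, heq, hcd⟩⟩
  -- per-hub cardinality bound
  have hScb : ∀ c ∈ T, ((Sc c).card : ℝ) ≤ 20 * n^2 / (t:ℝ)^2 := by
    intro c hcT
    set nd : V → ℕ := ndist H c t with hnd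
    set Q2 : ℝ := ∑ p : V × V, (if G.Adj p.1 p.2 then ((nd p.1:ℝ) - (nd p.2:ℝ))^2 else 0)
      with hQ2
    set M2 : ℝ := ∑ p : V × V, (if G.Adj p.1 p.2 then |(nd p.1:ℝ) - (nd p.2:ℝ)| else 0)
      with hM2
    set D2 : ℝ := ∑ p : V × V, (if G.Adj p.1 p.2 ∧ nd p.1 ≠ nd p.2 then (1:ℝ) else 0)
      with hD2
    have hQ2nn : 0 ≤ Q2 := by
      rw [hQ2]
      apply Finset.sum_nonneg
      intro p _
      split_ifs
      · positivity
      · exact le_refl 0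
    have hM2nn : 0 ≤ M2 := by
      rw [hM2]
      apply Finset.sum_nonneg
      intro p _
      split_ifs
      · positivity
      · exact le_refl 0
    have hD2nn : 0 ≤ D2 := by
      rw [hD2]
      apply Finset.sum_nonneg
      intro p _
      split_ifs
      · norm_num
      · exact le_refl 0
    have hcore := aux_core G H w eps heps heps1 hQ c t
    rw [← hnd] at hcore
    have hlapQ2 : lapQF G (fun _ _ => 1) (fun z => (nd z:ℝ)) = (1/2) * Q2 := by
      rw [hQ2, Fintype.sum_prod_type]
      unfold lapQF
      congr 1
      refine Finset.sum_congr rfl fun u _ => Finset.sum_congr rfl fun v _ => ?_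
      by_cases h : G.Adj u v
      · rw [if_pos h, if_pos h, one_mul]
      · rw [if_neg h, if_neg h]
    have hMflat : (∑ u : V, ∑ v : V, if G.Adj u v then |(nd u:ℝ) - (nd v:ℝ)| else 0) = M2 := by
      rw [hM2, Fintype.sum_prod_type]
    rw [hlapQ2, hMflat] at hcore
    have hκ : (1+eps)/(1-eps) ≤ 19/17 := by
      rw [div_le_iff₀ h1e]
      linarith
    have hcore2 : Q2 ≤ (19/17) * M2 := by
      have h2 : ((1+eps)/(1-eps))*((1/2)*M2) ≤ (19/17)*((1/2)*M2) :=
        mul_le_mul_of_nonneg_right hκ (by linarith)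
      linarith
    have hCS : M2^2 ≤ D2 * Q2 := by
      have h := Finset.sum_mul_sq_le_sq_mul_sq Finset.univ
        (fun p : V × V => if G.Adj p.1 p.2 ∧ nd p.1 ≠ nd p.2 then (1:ℝ) else 0)
        (fun p : V × V => if G.Adj p.1 p.2 then |(nd p.1:ℝ) - (nd p.2:ℝ)| else 0)
      have hfg : ∀ p : V × V,
          (if G.Adj p.1 p.2 ∧ nd p.1 ≠ nd p.2 then (1:ℝ) else 0) *
            (if G.Adj p.1 p.2 then |(nd p.1:ℝ) - (nd p.2:ℝ)| else 0)
          = (if G.Adj p.1 p.2 then |(nd p.1:ℝ) - (nd p.2:ℝ)| else 0) := by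
        intro p
        by_cases h1 : G.Adj p.1 p.2
        · by_cases h2 : nd p.1 = nd p.2
          · rw [if_neg (by tauto), if_pos h1, h2]
            simp
          · rw [if_pos ⟨h1, h2⟩, one_mul]
        · rw [if_neg (by tauto), if_neg h1]
          ring
      have hf2 : ∀ p : V × V,
          (if G.Adj p.1 p.2 ∧ nd p.1 ≠ nd p.2 then (1:ℝ) else 0)^2
          = (if G.Adj p.1 p.2 ∧ nd p.1 ≠ nd p.2 then (1:ℝ) else 0) := by
        intro p
        split_ifs <;> norm_num
      have hg2 : ∀ p : V × V,
          (if G.Adj p.1 p.2 then |(nd p.1:ℝ) - (nd p.2:ℝ)| else 0)^2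
          = (if G.Adj p.1 p.2 then ((nd p.1:ℝ) - (nd p.2:ℝ))^2 else 0) := by
        intro p
        split_ifs
        · rw [sq_abs]
        · norm_num
      calc M2^2 = (∑ p : V × V,
            (if G.Adj p.1 p.2 ∧ nd p.1 ≠ nd p.2 then (1:ℝ) else 0) *
              (if G.Adj p.1 p.2 then |(nd p.1:ℝ) - (nd p.2:ℝ)| else 0))^2 := by
            rw [hM2]
            congr 1
            exact (Finset.sum_congr rfl fun p _ => hfg p).symm
      _ ≤ (∑ p : V × V, (if G.Adj p.1 p.2 ∧ nd p.1 ≠ nd p.2 then (1:ℝ) else 0)^2) *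
            ∑ p : V × V, (if G.Adj p.1 p.2 then |(nd p.1:ℝ) - (nd p.2:ℝ)| else 0)^2 := h
      _ = D2 * Q2 := by
            rw [hD2, hQ2]
            congr 1
            · exact Finset.sum_congr rfl fun p _ => hf2 p
            · exact Finset.sum_congr rfl fun p _ => hg2 p
    have hQ2D2 : Q2 ≤ (19/17)^2 * D2 := by
      rcases eq_or_lt_of_le hQ2nn with h0 | hpos
      · rw [← h0]
        positivity
      · have hsq : Q2*Q2 ≤ ((19/17)*M2)*((19/17)*M2) := mul_self_le_mul_self hQ2nn hcore2
        have h1 : Q2*Q2 ≤ ((19/17)^2*D2)*Q2 := by nlinarith [hCS]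
        exact le_of_mul_le_mul_right h1 hpos
    have hD2n : D2 ≤ n^2 := by
      calc D2 ≤ ∑ _p : V × V, (1:ℝ) := by
            rw [hD2]
            apply Finset.sum_le_sum
            intro p _
            split_ifs <;> norm_num
      _ = n^2 := by
            rw [Finset.sum_const, Finset.card_univ, nsmul_eq_mul, mul_one, Fintype.card_prod,
              hn']
            push_cast
            ring
    -- injection
    set pk : Sym2 V → V × V := fun e =>
      if h : ∃ pq : V × V, e = s(pq.1, pq.2) ∧ H.edist c pq.1 ≤ (s':ℕ∞) then h.choose
      else (Classical.arbitrary V, Classical.arbitrary V) with hpkdef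
    have hpk : ∀ e ∈ Sc c, e = s((pk e).1, (pk e).2) ∧ H.edist c (pk e).1 ≤ (s':ℕ∞) := by
      intro e he
      obtain ⟨a, b, h1, h2⟩ := (Finset.mem_filter.mp he).2
      have hex : ∃ pq : V × V, e = s(pq.1, pq.2) ∧ H.edist c pq.1 ≤ (s':ℕ∞) := ⟨(a,b), h1, h2⟩
      rw [hpkdef]
      simp only [dif_pos hex]
      exact hex.choose_spec
    have hpkS : ∀ e ∈ Sc c, e ∈ Sfin := fun e he => (Finset.mem_filter.mp he).1
    have hpkadj : ∀ e ∈ Sc c, G.Adj (pk e).1 (pk e).2 := by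
      intro e he
      have h := (Finset.mem_filter.mp (hpkS e he)).2.1
      rw [(hpk e he).1] at h
      exact (SimpleGraph.mem_edgeSet G).mp h
    have hpkfar : ∀ e ∈ Sc c, (t:ℕ∞) < H.edist (pk e).1 (pk e).2 := by
      intro e he
      exact (Finset.mem_filter.mp (hpkS e he)).2.2 _ _ (hpk e he).1
    have hdelta : ∀ e ∈ Sc c, ((t:ℝ)/4)^2 ≤ ((nd (pk e).1:ℝ) - (nd (pk e).2:ℝ))^2 := by
      intro e he
      obtain ⟨hrepe, hnear⟩ := hpk e he
      have hnda : nd (pk e).1 ≤ s' := by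
        have h1 : ((nd (pk e).1 : ℕ∞)) ≤ (s':ℕ∞) := by
          rw [hnd, ndist_coe]
          exact le_trans inf_le_left hnear
        exact_mod_cast h1
      have hndb : t - s' ≤ nd (pk e).2 := by
        have hb1 : ((t - s' : ℕ):ℕ∞) ≤ H.edist c (pk e).2 := by
          by_contra hcon
          push_neg at hcon
          have h5 : (t:ℕ∞) < (s':ℕ∞) + H.edist c (pk e).2 := by
            calc (t:ℕ∞) < H.edist (pk e).1 (pk e).2 := hpkfar e he
            _ ≤ H.edist (pk e).1 c + H.edist c (pk e).2 := SimpleGraph.edist_triangle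
            _ = H.edist c (pk e).1 + H.edist c (pk e).2 := by
                rw [SimpleGraph.edist_comm (u := (pk e).1) (v := c)]
            _ ≤ (s':ℕ∞) + H.edist c (pk e).2 := add_le_add_left hnear _
          have h6 : (t:ℕ∞) < (s':ℕ∞) + ((t - s' : ℕ):ℕ∞) :=
            lt_of_lt_of_le h5 (add_le_add_right hcon.le _)
          have h7 : ((s':ℕ):ℕ∞) + ((t - s':ℕ):ℕ∞) = ((s' + (t - s') : ℕ):ℕ∞) := by
            push_cast
            ring
          rw [h7] at h6
          have h8 : s' + (t - s') = t := by omega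
          rw [h8] at h6
          exact lt_irrefl _ h6
        have hb2 : ((t - s' : ℕ):ℕ∞) ≤ ((nd (pk e).2 : ℕ∞)) := by
          rw [hnd, ndist_coe]
          refine le_inf hb1 ?_
          exact_mod_cast (by omega : t - s' ≤ t)
        exact_mod_cast hb2
      have hnat : 4 * nd (pk e).1 + t ≤ 4 * nd (pk e).2 := by omega
      have hreal : (t:ℝ)/4 ≤ (nd (pk e).2:ℝ) - (nd (pk e).1:ℝ) := by
        have hcast : (4:ℝ) * (nd (pk e).1:ℝ) + (t:ℝ) ≤ 4 * (nd (pk e).2:ℝ) := by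
          exact_mod_cast hnat
        linarith
      have h9 : ((t:ℝ)/4)^2 ≤ ((nd (pk e).2:ℝ) - (nd (pk e).1:ℝ))^2 :=
        pow_le_pow_left₀ (by positivity) hreal 2
      calc ((t:ℝ)/4)^2 ≤ ((nd (pk e).2:ℝ) - (nd (pk e).1:ℝ))^2 := h9
      _ = ((nd (pk e).1:ℝ) - (nd (pk e).2:ℝ))^2 := by ring
    have hsum1 : ((Sc c).card : ℝ) * ((t:ℝ)/4)^2
        ≤ ∑ e ∈ Sc c, ((nd (pk e).1:ℝ) - (nd (pk e).2:ℝ))^2 := by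
      have h := Finset.card_nsmul_le_sum (Sc c)
        (fun e => ((nd (pk e).1:ℝ) - (nd (pk e).2:ℝ))^2) (((t:ℝ)/4)^2) hdelta
      rwa [nsmul_eq_mul] at h
    have hinj2 : ∀ e1 ∈ Sc c, ∀ e2 ∈ Sc c, pk e1 = pk e2 → e1 = e2 := by
      intro e1 h1 e2 h2 h
      rw [(hpk e1 h1).1, h, ← (hpk e2 h2).1]
    have hsum2 : ∑ e ∈ Sc c, ((nd (pk e).1:ℝ) - (nd (pk e).2:ℝ))^2
        = ∑ p ∈ (Sc c).image pk, ((nd p.1:ℝ) - (nd p.2:ℝ))^2 :=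
      (Finset.sum_image (f := fun p : V × V => ((nd p.1:ℝ) - (nd p.2:ℝ))^2)
        (g := pk) hinj2).symm
    have hsum3 : ∑ p ∈ (Sc c).image pk, ((nd p.1:ℝ) - (nd p.2:ℝ))^2 ≤ Q2 := by
      rw [hQ2]
      calc ∑ p ∈ (Sc c).image pk, ((nd p.1:ℝ) - (nd p.2:ℝ))^2
          = ∑ p ∈ (Sc c).image pk,
              (if G.Adj p.1 p.2 then ((nd p.1:ℝ) - (nd p.2:ℝ))^2 else 0) := by
            refine Finset.sum_congr rfl fun p hp => ?_
            obtain ⟨e, he, hpe⟩ := Finset.mem_image.mp hp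
            rw [if_pos (hpe ▸ hpkadj e he)]
      _ ≤ ∑ p : V × V, (if G.Adj p.1 p.2 then ((nd p.1:ℝ) - (nd p.2:ℝ))^2 else 0) := by
            apply Finset.sum_le_sum_of_subset_of_nonneg (Finset.subset_univ _)
            intro p _ _
            split_ifs
            · positivity
            · exact le_refl 0
    have hfinal : ((Sc c).card : ℝ) * ((t:ℝ)/4)^2 ≤ (19/17)^2 * n^2 := by
      calc ((Sc c).card : ℝ) * ((t:ℝ)/4)^2 ≤ Q2 := by
            rw [hsum2] at hsum1
            linarith [hsum1, hsum3]
      _ ≤ (19/17)^2 * D2 := hQ2D2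
      _ ≤ (19/17)^2 * n^2 := mul_le_mul_of_nonneg_left hD2n (by norm_num)
    rw [le_div_iff₀ (by positivity : (0:ℝ) < (t:ℝ)^2)]
    nlinarith [hfinal, sq_nonneg n]
  -- assemble
  have hNb : (Sfin.card:ℝ) ≤ 160 * n^3 / (t:ℝ)^3 := by
    have hc1 : Sfin.card ≤ ∑ c ∈ T, (Sc c).card :=
      le_trans (Finset.card_le_card hcoverS) Finset.card_biUnion_le
    have hc2 : (Sfin.card:ℝ) ≤ ∑ c ∈ T, ((Sc c).card:ℝ) := by
      push_cast
      exact_mod_cast hc1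
    have hc3 : ∑ c ∈ T, ((Sc c).card:ℝ) ≤ ∑ _c ∈ T, (20 * n^2/(t:ℝ)^2) :=
      Finset.sum_le_sum hScb
    have hc4 : ∑ _c ∈ T, (20 * n^2/(t:ℝ)^2) = (T.card:ℝ) * (20*n^2/(t:ℝ)^2) := by
      rw [Finset.sum_const, nsmul_eq_mul]
    have hT8 : (T.card:ℝ) ≤ 8*n/(t:ℝ) := by
      rw [le_div_iff₀ htR]
      exact hTcard
    have h20 : (0:ℝ) ≤ 20*n^2/(t:ℝ)^2 := by positivity
    calc (Sfin.card:ℝ) ≤ (T.card:ℝ) * (20*n^2/(t:ℝ)^2) := by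
          rw [← hc4]
          linarith
    _ ≤ (8*n/(t:ℝ)) * (20*n^2/(t:ℝ)^2) := mul_le_mul_of_nonneg_right hT8 h20
    _ = 160*n^3/(t:ℝ)^3 := by
          field_simp
          ring
  rw [le_div_iff₀ hden]
  have hA1 : (Sfin.card:ℝ) * (t:ℝ)^3 ≤ 160*n^3 := by
    rw [le_div_iff₀ (by positivity : (0:ℝ) < (t:ℝ)^3)] at hNb
    exact hNb
  have hL2 : L^2 ≤ 4*(Real.log n)^2 := by nlinarith [hLn, hLpos]
  have hcard_nn : (0:ℝ) ≤ (Sfin.card:ℝ) := Nat.cast_nonneg _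
  have hn3' : (0:ℝ) ≤ n^3 := by positivity
  nlinarith [mul_le_mul_of_nonneg_right hA1 (sq_nonneg L),
    mul_le_mul_of_nonneg_left hL2 (by positivity : (0:ℝ) ≤ 160*n^3),
    sq_nonneg (Real.log n), hn3']
end

section
/- There exists a universal constant C > 0 such that the following holds. Let G=(V,E) be a finite simple unweighted graph on n ≥ 3 vertices with m = |E| ≥ 2 edges, let eps ∈ (0, 1/18], let H be a (1±eps)-spectral sparsifier of G, and let t ≥ 1 be an integer. Then the number of edges {u,v} ∈ E with d_{hat H}(u,v) > t is at most C * n * m * log n / t^2. -/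
open scoped Classical
open Finset

/-! ### Auxiliary material for the proof of Statement 9 -/

set_option linter.unnecessarySeqFocus false
set_option linter.unusedSectionVars false

section Stmt9Aux

local notation "⟪" x ", " y "⟫" => @inner ℝ _ _ x y

variable {V : Type} [Fintype V]

/-! #### Parseval-type facts in Euclidean space -/

lemma stmt9_norm_proj_sq_eq {ι : Type} [Fintype ι] [DecidableEq ι] (W : Submodule ℝ (EuclideanSpace ℝ ι))
    (v : EuclideanSpace ℝ ι) :
    ‖(Submodule.orthogonalProjection W v : EuclideanSpace ℝ ι)‖ ^ 2
      = ∑ j, ⟪(stdOrthonormalBasis ℝ W j : EuclideanSpace ℝ ι), v⟫ ^ 2 := by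
  set b := stdOrthonormalBasis ℝ W
  have h1 : ‖(Submodule.orthogonalProjection W v : EuclideanSpace ℝ ι)‖
      = ‖b.repr (Submodule.orthogonalProjection W v)‖ := by
    rw [b.repr.norm_map, Submodule.norm_coe]
  rw [h1]
  rw [EuclideanSpace.norm_eq, Real.sq_sqrt (by positivity)]
  refine Finset.sum_congr rfl fun j _ => ?_
  rw [b.repr_apply_apply]
  rw [Submodule.inner_orthogonalProjection_eq_of_mem_left]
  simp [Real.norm_eq_abs, sq_abs]

lemma stmt9_sum_norm_proj_single_sq {ι : Type} [Fintype ι] [DecidableEq ι]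
    (W : Submodule ℝ (EuclideanSpace ℝ ι)) :
    ∑ i : ι, ‖(Submodule.orthogonalProjection W (EuclideanSpace.single i 1) : EuclideanSpace ℝ ι)‖ ^ 2
      = (Module.finrank ℝ W : ℝ) := by
  simp_rw [stmt9_norm_proj_sq_eq]
  rw [Finset.sum_comm]
  have key : ∀ j, ∑ i : ι, ⟪(stdOrthonormalBasis ℝ W j : EuclideanSpace ℝ ι),
      EuclideanSpace.single i (1:ℝ)⟫ ^ 2 = 1 := by
    intro j
    have hn : ‖(stdOrthonormalBasis ℝ W j : EuclideanSpace ℝ ι)‖ = 1 := by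
      rw [Submodule.norm_coe]
      exact (stdOrthonormalBasis ℝ W).orthonormal.1 j
    calc ∑ i : ι, ⟪(stdOrthonormalBasis ℝ W j : EuclideanSpace ℝ ι),
          EuclideanSpace.single i (1:ℝ)⟫ ^ 2
        = ∑ i : ι, ((stdOrthonormalBasis ℝ W j : EuclideanSpace ℝ ι) i) ^ 2 := by
          refine Finset.sum_congr rfl fun i _ => ?_
          rw [EuclideanSpace.inner_single_right]
          simp
      _ = ‖(stdOrthonormalBasis ℝ W j : EuclideanSpace ℝ ι)‖ ^ 2 := by
          rw [EuclideanSpace.norm_eq, Real.sq_sqrt (by positivity)]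
          simp [Real.norm_eq_abs, sq_abs]
      _ = 1 := by rw [hn]; norm_num
  simp_rw [key]
  simp

/-! #### The (signed, oriented) incidence-type map and leverage scores -/

noncomputable def stmt9Bmap (G : SimpleGraph V) : (V → ℝ) →ₗ[ℝ] EuclideanSpace ℝ (V × V) where
  toFun x := WithLp.toLp 2 (fun p : V × V => if G.Adj p.1 p.2 then x p.1 - x p.2 else 0)
  map_add' x y := by
    ext p
    by_cases h : G.Adj p.1 p.2 <;> simp [h] <;> ring
  map_smul' c x := by
    ext p
    by_cases h : G.Adj p.1 p.2 <;> simp [h] <;> ring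

@[simp] lemma stmt9Bmap_apply (G : SimpleGraph V) (x : V → ℝ) (p : V × V) :
    stmt9Bmap G x p = if G.Adj p.1 p.2 then x p.1 - x p.2 else 0 := rfl

lemma stmt9_lapQF_double (G : SimpleGraph V) (w : V → V → ℝ) (x : V → ℝ) :
    2 * lapQF G w x
      = ∑ p : V × V, if G.Adj p.1 p.2 then w p.1 p.2 * (x p.1 - x p.2) ^ 2 else 0 := by
  rw [lapQF, Fintype.sum_prod_type]
  ring

lemma stmt9_inner_B_self (G : SimpleGraph V) (x : V → ℝ) :
    ⟪stmt9Bmap G x, stmt9Bmap G x⟫ = 2 * lapQF G (fun _ _ => 1) x := by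
  rw [stmt9_lapQF_double, PiLp.inner_apply]
  refine Finset.sum_congr rfl fun p _ => ?_
  by_cases h : G.Adj p.1 p.2 <;> simp [h] <;> ring

/-- Leverage score of the ordered pair `p` in `G`. -/
noncomputable def stmt9tau (G : SimpleGraph V) (p : V × V) : ℝ :=
  ‖(Submodule.orthogonalProjection (LinearMap.range (stmt9Bmap G)) (EuclideanSpace.single p 1) :
      EuclideanSpace ℝ (V × V))‖ ^ 2

lemma stmt9tau_nonneg (G : SimpleGraph V) (p : V × V) : 0 ≤ stmt9tau G p := sq_nonneg _

lemma stmt9_cs_step (G : SimpleGraph V) (x : V → ℝ) {u v : V} (h : G.Adj u v) :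
    (x u - x v) ^ 2 ≤ stmt9tau G (u, v) * (2 * lapQF G (fun _ _ => 1) x) := by
  set W := LinearMap.range (stmt9Bmap G)
  set s : EuclideanSpace ℝ (V × V) := EuclideanSpace.single (u, v) (1:ℝ)
  have hmem : stmt9Bmap G x ∈ W := LinearMap.mem_range_self _ _
  have h1 : ⟪s, stmt9Bmap G x⟫ = x u - x v := by
    rw [EuclideanSpace.inner_single_left]
    simp [h]
  have h2 : ⟪s - (Submodule.orthogonalProjection W s : EuclideanSpace ℝ (V × V)), stmt9Bmap G x⟫ = 0 := by
    have : s - (Submodule.orthogonalProjection W s : EuclideanSpace ℝ (V × V)) ∈ Wᗮ :=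
      Submodule.sub_starProjection_mem_orthogonal (K := W) s
    exact (Submodule.mem_orthogonal' W _).mp this _ hmem
  have h3 : ⟪(Submodule.orthogonalProjection W s : EuclideanSpace ℝ (V × V)), stmt9Bmap G x⟫
      = x u - x v := by
    rw [← h1]
    have := inner_sub_left (𝕜 := ℝ) s
      ((Submodule.orthogonalProjection W s : EuclideanSpace ℝ (V × V))) (stmt9Bmap G x)
    linarith [h2, this]
  have habs : |⟪(Submodule.orthogonalProjection W s : EuclideanSpace ℝ (V × V)), stmt9Bmap G x⟫|
      ≤ ‖(Submodule.orthogonalProjection W s : EuclideanSpace ℝ (V × V))‖ * ‖stmt9Bmap G x‖ :=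
    abs_real_inner_le_norm _ _
  have hsq : (x u - x v) ^ 2 ≤ (‖(Submodule.orthogonalProjection W s : EuclideanSpace ℝ (V × V))‖
      * ‖stmt9Bmap G x‖) ^ 2 := by
    rw [← h3]
    calc ⟪(Submodule.orthogonalProjection W s : EuclideanSpace ℝ (V × V)), stmt9Bmap G x⟫ ^ 2
        = |⟪(Submodule.orthogonalProjection W s : EuclideanSpace ℝ (V × V)), stmt9Bmap G x⟫| ^ 2 := by
          rw [sq_abs]
      _ ≤ _ := by
          apply pow_le_pow_left₀ (abs_nonneg _) habs
  calc (x u - x v) ^ 2 ≤ (‖(Submodule.orthogonalProjection W s : EuclideanSpace ℝ (V × V))‖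
      * ‖stmt9Bmap G x‖) ^ 2 := hsq
    _ = stmt9tau G (u, v) * ‖stmt9Bmap G x‖ ^ 2 := by rw [mul_pow]; rfl
    _ = stmt9tau G (u, v) * (2 * lapQF G (fun _ _ => 1) x) := by
        rw [← stmt9_inner_B_self, real_inner_self_eq_norm_sq]

set_option maxHeartbeats 2000000 in
lemma stmt9_sum_tau_le (G : SimpleGraph V) :
    ∑ p : V × V, stmt9tau G p ≤ (Fintype.card V : ℝ) := by
  have h := LinearMap.finrank_range_le (stmt9Bmap G)
  rw [Module.finrank_fintype_fun_eq_card] at h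
  have h' : ((Module.finrank ℝ (LinearMap.range (stmt9Bmap G))) : ℝ)
      ≤ (Fintype.card V : ℝ) := by exact_mod_cast h
  have heq : ∑ p : V × V, stmt9tau G p
      = ((Module.finrank ℝ (LinearMap.range (stmt9Bmap G))) : ℝ) := by
    unfold stmt9tau
    exact stmt9_sum_norm_proj_single_sq (LinearMap.range (stmt9Bmap G))
  rw [heq]
  exact h'

/-! #### Total-weight bounds -/

lemma stmt9_sum_sq_indicator {a b : V} (hab : a ≠ b) :
    ∑ v : V, ((if a = v then (1:ℝ) else 0) - (if b = v then 1 else 0)) ^ 2 = 2 := by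
  have h : ∀ v : V, ((if a = v then (1:ℝ) else 0) - (if b = v then 1 else 0)) ^ 2
      = (if a = v then (1:ℝ) else 0) + (if b = v then 1 else 0) := by
    intro v
    by_cases h1 : a = v <;> by_cases h2 : b = v
    · exact absurd (h1.trans h2.symm) hab
    all_goals simp [h1, h2]
  simp_rw [h]
  rw [Finset.sum_add_distrib]
  simp
  norm_num

lemma stmt9_sum_lapQF_ind (H : SimpleGraph V) (w : V → V → ℝ) :
    ∑ v : V, lapQF H w (fun c => if c = v then (1:ℝ) else 0)
      = ∑ a : V, ∑ b : V, if H.Adj a b then w a b else 0 := by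
  unfold lapQF
  rw [← Finset.mul_sum]
  rw [Finset.sum_comm]
  have h : ∀ a : V, ∑ v : V, ∑ b : V,
      (if H.Adj a b then
        w a b * ((if a = v then (1:ℝ) else 0) - (if b = v then 1 else 0)) ^ 2 else 0)
      = ∑ b : V, (if H.Adj a b then w a b * 2 else 0) := by
    intro a
    rw [Finset.sum_comm]
    refine Finset.sum_congr rfl fun b _ => ?_
    by_cases h : H.Adj a b
    · simp only [h, if_true]
      rw [← Finset.mul_sum, stmt9_sum_sq_indicator h.ne]
    · simp [h]
  simp_rw [h]
  have h2 : ∀ a b : V,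
      (if H.Adj a b then w a b * 2 else 0) = 2 * (if H.Adj a b then w a b else 0) := by
    intro a b; by_cases h : H.Adj a b <;> simp [h] <;> ring
  simp_rw [h2, ← Finset.mul_sum]
  ring

lemma stmt9_sum_deg (G : SimpleGraph V) :
    ∑ a : V, ∑ b : V, (if G.Adj a b then (1:ℝ) else 0)
      = 2 * (G.edgeSet.ncard : ℝ) := by
  have h1 : ∀ a : V, ∑ b : V, (if G.Adj a b then (1:ℝ) else 0) = (G.degree a : ℝ) := by
    intro a
    rw [Finset.sum_boole]
    congr 1
    rw [SimpleGraph.degree, SimpleGraph.neighborFinset_eq_filter]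
  simp_rw [h1]
  rw [← Nat.cast_sum, SimpleGraph.sum_degrees_eq_twice_card_edges]
  rw [← SimpleGraph.coe_edgeFinset, Set.ncard_coe_finset]
  push_cast
  ring

lemma stmt9_lapQF_le_of_lip (H : SimpleGraph V) (w : V → V → ℝ)
    (hw : ∀ a b, H.Adj a b → 0 < w a b) (x : V → ℝ)
    (hx : ∀ a b, H.Adj a b → (x a - x b) ^ 2 ≤ 1) :
    lapQF H w x ≤ (1 / 2) * ∑ a : V, ∑ b : V, (if H.Adj a b then w a b else 0) := by
  unfold lapQF
  have hhalf : (0:ℝ) ≤ 1 / 2 := by norm_num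
  apply mul_le_mul_of_nonneg_left _ hhalf
  apply Finset.sum_le_sum
  intro a _
  apply Finset.sum_le_sum
  intro b _
  by_cases h : H.Adj a b
  · simp only [h, if_true]
    have := hx a b h
    nlinarith [hw a b h]
  · simp [h]

/-! #### Truncated distance test vectors -/

noncomputable def stmt9distVec (H : SimpleGraph V) (u : V) (t : ℕ) (c : V) : ℝ :=
  ((min (H.edist u c) (t : ℕ∞)).toNat : ℝ)

lemma stmt9distVec_self (H : SimpleGraph V) (u : V) (t : ℕ) : stmt9distVec H u t u = 0 := by
  simp [stmt9distVec, SimpleGraph.edist_self]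

lemma stmt9distVec_far (H : SimpleGraph V) {u v : V} {t : ℕ} (h : (t : ℕ∞) < H.edist u v) :
    stmt9distVec H u t v = t := by
  rw [stmt9distVec, min_eq_right h.le, ENat.toNat_coe]

lemma stmt9distVec_step (H : SimpleGraph V) (u : V) (t : ℕ) {a b : V} (h : H.Adj a b) :
    stmt9distVec H u t b ≤ stmt9distVec H u t a + 1 := by
  have htri : H.edist u b ≤ H.edist u a + 1 := by
    have := SimpleGraph.edist_triangle (G := H) (u := u) (v := a) (w := b)
    rwa [SimpleGraph.edist_eq_one_iff_adj.mpr h] at this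
  set A := (min (H.edist u a) (t : ℕ∞)).toNat with hA
  have hfin : min (H.edist u a) (t : ℕ∞) ≠ ⊤ :=
    ne_top_of_le_ne_top (ENat.coe_ne_top t) (min_le_right _ _)
  have hcoe : min (H.edist u a) (t : ℕ∞) = (A : ℕ∞) := (ENat.coe_toNat hfin).symm
  have hle : min (H.edist u b) (t : ℕ∞) ≤ ((A + 1 : ℕ) : ℕ∞) := by
    have h1 : min (H.edist u b) (t : ℕ∞) ≤ min (H.edist u a + 1) ((t : ℕ∞) + 1) :=
      min_le_min htri (le_self_add)
    rw [min_add_add_right, hcoe] at h1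
    simpa using h1
  have hfinal : (min (H.edist u b) (t : ℕ∞)).toNat ≤ A + 1 := by
    have := ENat.toNat_le_toNat hle (ENat.coe_ne_top _)
    simpa only [ENat.toNat_coe] using this
  unfold stmt9distVec
  rw [← hA]
  exact_mod_cast hfinal

lemma stmt9distVec_lip (H : SimpleGraph V) (u : V) (t : ℕ) {a b : V} (h : H.Adj a b) :
    (stmt9distVec H u t a - stmt9distVec H u t b) ^ 2 ≤ 1 := by
  have h1 := stmt9distVec_step H u t h
  have h2 := stmt9distVec_step H u t h.symm
  rw [← sq_abs]
  have habs : |stmt9distVec H u t a - stmt9distVec H u t b| ≤ 1 :=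
    abs_le.mpr ⟨by linarith, by linarith⟩
  calc |stmt9distVec H u t a - stmt9distVec H u t b| ^ 2 ≤ 1 ^ 2 := by
        apply pow_le_pow_left₀ (abs_nonneg _) habs
    _ = 1 := one_pow 2

end Stmt9Aux

/-- There is a universal constant `C > 0` such that for every `n ≥ 3`-vertex
unweighted graph `G` with `m ≥ 2` edges, every `eps ∈ (0, 1/18]`, every
`(1 ± eps)`-spectral sparsifier `H` of `G`, and every integer `t ≥ 1`, the number of edges
`{u,v}` of `G` with `d_{Ĥ}(u,v) > t` is at most `C * n * m * log n / t^2`. -/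
theorem stmt9 :
    ∃ C : ℝ, 0 < C ∧
      ∀ (V : Type) [Fintype V] (G H : SimpleGraph V) (w : V → V → ℝ) (eps : ℝ) (t : ℕ),
        3 ≤ Fintype.card V →
        2 ≤ G.edgeSet.ncard →
        0 < eps → eps ≤ 1 / 18 →
        IsSpectralSparsifier G H w eps →
        1 ≤ t →
        (({e ∈ G.edgeSet | ∀ u v : V, e = s(u, v) → (t : ℕ∞) < H.edist u v}.ncard : ℝ)) ≤
          C * (Fintype.card V : ℝ) * (G.edgeSet.ncard : ℝ) * Real.log (Fintype.card V) /
            (t : ℝ) ^ 2 := by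
  refine ⟨4, by norm_num, ?_⟩
  intro V _ G H w eps t hn hm heps heps' hsp ht
  obtain ⟨hle, hwpos, hwsym, hquad⟩ := hsp
  have hVne : Nonempty V := Fintype.card_pos_iff.mp (by omega)
  have hm2' : (2:ℝ) ≤ (G.edgeSet.ncard : ℝ) := by exact_mod_cast hm
  have hn3' : (3:ℝ) ≤ (Fintype.card V : ℝ) := by exact_mod_cast hn
  set n : ℝ := (Fintype.card V : ℝ) with hn_def
  set m : ℝ := (G.edgeSet.ncard : ℝ) with hm_def
  have hm2 : (2:ℝ) ≤ m := hm2'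
  have hmpos : (0:ℝ) < m := by linarith
  have hn3 : (3:ℝ) ≤ n := hn3'
  have htpos : (0:ℝ) < (t:ℝ) := by exact_mod_cast ht
  have hepslt : eps < 1 := lt_of_le_of_lt heps' (by norm_num)
  have h1e : (0:ℝ) < 1 - eps := by linarith
  -- total weight bound
  set SW : ℝ := ∑ a : V, ∑ b : V, (if H.Adj a b then w a b else 0) with hSW_def
  have hSWle : (1 - eps) * SW ≤ 2 * m := by
    have h1 : (1 - eps) * SW
        = ∑ v : V, (1 - eps) * lapQF H w (fun c => if c = v then (1:ℝ) else 0) := by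
      rw [← Finset.mul_sum, stmt9_sum_lapQF_ind]
    have h2 : ∑ v : V, (1 - eps) * lapQF H w (fun c => if c = v then (1:ℝ) else 0)
        ≤ ∑ v : V, lapQF G (fun _ _ => 1) (fun c => if c = v then (1:ℝ) else 0) :=
      Finset.sum_le_sum fun v _ => (hquad _).1
    have h3 : ∑ v : V, lapQF G (fun _ _ => (1:ℝ)) (fun c => if c = v then (1:ℝ) else 0)
        = 2 * m := by
      rw [stmt9_sum_lapQF_ind, stmt9_sum_deg]
    linarith
  have hSWbound : SW ≤ 2 * m / (1 - eps) := by
    rw [le_div_iff₀ h1e]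
    linarith [hSWle]
  -- the bad set
  set Sset : Set (Sym2 V) :=
    {e ∈ G.edgeSet | ∀ u v : V, e = s(u, v) → (t : ℕ∞) < H.edist u v} with hSset_def
  set Sfin : Finset (Sym2 V) := Sset.toFinset with hSfin_def
  have hncard : (Sset.ncard : ℝ) = (Sfin.card : ℝ) := by
    rw [Set.ncard_eq_toFinset_card']
  -- the key leverage-score lower bound for each bad edge
  have key : ∀ e ∈ Sfin, ∃ p : V × V,
      s(p.1, p.2) = e ∧ (t:ℝ)^2 / (4 * m) ≤ stmt9tau G p := by
    intro e he
    induction e using Sym2.ind with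
    | _ a b =>
      rw [hSfin_def, Set.mem_toFinset] at he
      obtain ⟨hedge, hfar⟩ := he
      have hadj : G.Adj a b := hedge
      have hdist : (t : ℕ∞) < H.edist a b := hfar a b rfl
      refine ⟨(a, b), rfl, ?_⟩
      set y : V → ℝ := stmt9distVec H a t with hy_def
      have hy0 : y a = 0 := stmt9distVec_self H a t
      have hyb : y b = t := stmt9distVec_far H hdist
      have hcs := stmt9_cs_step G y hadj
      have hysq : (y a - y b) ^ 2 = (t:ℝ)^2 := by rw [hy0, hyb]; ring
      have hQH : lapQF H w y ≤ (1/2) * SW :=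
        stmt9_lapQF_le_of_lip H w hwpos y (fun a' b' hab => stmt9distVec_lip H a t hab)
      have hQG : lapQF G (fun _ _ => 1) y ≤ (1 + eps) * lapQF H w y := (hquad y).2
      have heps2 : (1 + eps) ≤ 2 * (1 - eps) := by linarith
      have hQG2 : lapQF G (fun _ _ => 1) y ≤ 2 * m := by
        have hQH2 : lapQF H w y ≤ m / (1 - eps) := by
          calc lapQF H w y ≤ (1/2) * SW := hQH
            _ ≤ (1/2) * (2 * m / (1 - eps)) := by linarith [hSWbound]
            _ = m / (1 - eps) := by ring
        calc lapQF G (fun _ _ => 1) y ≤ (1 + eps) * lapQF H w y := hQG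
          _ ≤ (1 + eps) * (m / (1 - eps)) := by
              apply mul_le_mul_of_nonneg_left hQH2 (by linarith)
          _ ≤ (2 * (1 - eps)) * (m / (1 - eps)) := by
              apply mul_le_mul_of_nonneg_right heps2 (le_of_lt (div_pos hmpos h1e))
          _ = 2 * m := by field_simp
      have htau0 : 0 ≤ stmt9tau G (a, b) := stmt9tau_nonneg G _
      have hmain : (t:ℝ)^2 ≤ stmt9tau G (a, b) * (4 * m) := by
        calc (t:ℝ)^2 = (y a - y b)^2 := hysq.symm
          _ ≤ stmt9tau G (a, b) * (2 * lapQF G (fun _ _ => 1) y) := hcs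
          _ ≤ stmt9tau G (a, b) * (4 * m) := by nlinarith [hQG2, htau0]
      rw [div_le_iff₀ (by linarith : (0:ℝ) < 4 * m)]
      exact hmain
  -- choice of representatives
  have key' : ∀ e : Sym2 V, ∃ p : V × V, e ∈ Sfin →
      (s(p.1, p.2) = e ∧ (t:ℝ)^2 / (4 * m) ≤ stmt9tau G p) := by
    intro e
    by_cases he : e ∈ Sfin
    · obtain ⟨p, hp⟩ := key e he
      exact ⟨p, fun _ => hp⟩
    · exact ⟨(Classical.arbitrary V, Classical.arbitrary V), fun h => absurd h he⟩
  choose f hf using key'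
  have hinj : ∀ e₁ ∈ Sfin, ∀ e₂ ∈ Sfin, f e₁ = f e₂ → e₁ = e₂ := by
    intro e₁ h₁ e₂ h₂ hfe
    rw [← (hf e₁ h₁).1, ← (hf e₂ h₂).1, hfe]
  -- summation
  have hs1 : (Sfin.card : ℝ) * ((t:ℝ)^2 / (4 * m)) ≤ ∑ e ∈ Sfin, stmt9tau G (f e) := by
    have := Finset.sum_le_sum (s := Sfin) (f := fun _ => (t:ℝ)^2 / (4 * m))
      (g := fun e => stmt9tau G (f e)) (fun e he => (hf e he).2)
    simpa [Finset.sum_const, nsmul_eq_mul] using this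
  have hs2 : ∑ e ∈ Sfin, stmt9tau G (f e) = ∑ p ∈ Sfin.image f, stmt9tau G p :=
    (Finset.sum_image hinj).symm
  have hs3 : ∑ p ∈ Sfin.image f, stmt9tau G p ≤ ∑ p : V × V, stmt9tau G p :=
    Finset.sum_le_sum_of_subset_of_nonneg (Finset.subset_univ _)
      (fun p _ _ => stmt9tau_nonneg G p)
  have hs4 : ∑ p : V × V, stmt9tau G p ≤ n := stmt9_sum_tau_le G
  have hfinal : (Sfin.card : ℝ) * ((t:ℝ)^2 / (4 * m)) ≤ n := by linarith
  -- conclude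
  have ht2 : (0:ℝ) < (t:ℝ)^2 := pow_pos htpos 2
  have h4m : (0:ℝ) < 4 * m := by linarith
  have hcardle : (Sfin.card : ℝ) ≤ 4 * n * m / (t:ℝ)^2 := by
    rw [le_div_iff₀ ht2]
    have hstep := mul_le_mul_of_nonneg_right hfinal h4m.le
    calc (Sfin.card : ℝ) * (t:ℝ)^2
        = (Sfin.card : ℝ) * ((t:ℝ)^2 / (4 * m)) * (4 * m) := by field_simp
      _ ≤ n * (4 * m) := hstep
      _ = 4 * n * m / (t:ℝ)^2 * (t:ℝ)^2 := by field_simp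
      _ = _ := by field_simp
  have hlog : 1 ≤ Real.log n := by
    have hexp : Real.exp 1 < 3 := lt_trans Real.exp_one_lt_d9 (by norm_num)
    have h1 : (1:ℝ) = Real.log (Real.exp 1) := (Real.log_exp 1).symm
    have h2 : Real.log (Real.exp 1) < Real.log 3 :=
      Real.log_lt_log (Real.exp_pos 1) hexp
    have h3 : Real.log 3 ≤ Real.log n := Real.log_le_log (by norm_num) hn3
    linarith
  calc (Sset.ncard : ℝ) = (Sfin.card : ℝ) := hncard
    _ ≤ 4 * n * m / (t:ℝ)^2 := hcardle
    _ ≤ 4 * n * m * Real.log n / (t:ℝ)^2 := by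
        have hnum : 4 * n * m ≤ 4 * n * m * Real.log n :=
          le_mul_of_one_le_right (by nlinarith) hlog
        exact div_le_div_of_nonneg_right hnum ht2.le
    _ = 4 * n * m * Real.log n / (t:ℝ)^2 := rfl
end

section
/- For every eps ∈ (0,1) there exists a constant c > 0 such that for all sufficiently large n there exist a finite simple unweighted graph G=(V,E) on n vertices, a (1±eps)-spectral sparsifier H of G, and an edge {u,v} ∈ E with {u,v} ∉ E_H and d_{hat H}(u,v) ≥ c * n^{2/3} / log n. In particular, the stretch guarantee n^{2/3} (up to polylogarithmic factors) for unweighted versions of spectral sparsifiers is tight. -/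
open scoped Classical
open Finset

namespace Stmt10Aux

/-- Layer function: vertex `0` is `u` (layer 0), vertices `1..L*s` form `L` layers of size `s`
(layers `1..L`), vertex `L*s+1` is `v` (layer `L+1`); all other vertices get far-apart junk
values, so they are isolated. -/
def Fl (s L i : ℕ) : ℕ :=
  if i = 0 then 0
  else if i ≤ L * s then 1 + (i - 1) / s
  else if i = L * s + 1 then L + 1
  else L + 2 + 2 * i

lemma Fl_zero (s L : ℕ) : Fl s L 0 = 0 := by simp [Fl]

lemma Fl_eq_zero_iff {s L : ℕ} (i : ℕ) : Fl s L i = 0 ↔ i = 0 := by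
  unfold Fl
  generalize (i - 1) / s = q
  split_ifs <;> first | omega | simp_all | (simp only [false_iff, iff_false, true_iff, iff_true]; omega)

lemma Fl_top {s L : ℕ} : Fl s L (L * s + 1) = L + 1 := by
  unfold Fl
  generalize (L * s + 1 - 1) / s = q
  split_ifs <;> first | omega | simp_all | (simp only [false_iff, iff_false, true_iff, iff_true]; omega)

lemma Fl_eq_top_iff {s L : ℕ} (hs : 1 ≤ s) (hL : 1 ≤ L) (i : ℕ) :
    Fl s L i = L + 1 ↔ i = L * s + 1 := by
  have hls : 1 ≤ L * s := Nat.one_le_iff_ne_zero.mpr (Nat.mul_ne_zero (by omega) (by omega))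
  unfold Fl
  split_ifs with h1 h2 h3
  · first | omega | simp_all | (simp only [false_iff, iff_false, true_iff, iff_true]; omega)
  · have hd : (i - 1) / s < L := (Nat.div_lt_iff_lt_mul (by omega)).mpr (by omega)
    first | omega | simp_all | (simp only [false_iff, iff_false, true_iff, iff_true]; omega)
  · first | omega | simp_all | (simp only [false_iff, iff_false, true_iff, iff_true]; omega)
  · first | omega | simp_all | (simp only [false_iff, iff_false, true_iff, iff_true]; omega)

lemma idx_le {s L j k : ℕ} (hj1 : 1 ≤ j) (hjL : j ≤ L) (hk : k < s) :
    1 + (j - 1) * s + k ≤ L * s := by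
  have hmul : (j - 1) * s + s = j * s := by
    have hj : j - 1 + 1 = j := by omega
    calc (j - 1) * s + s = ((j - 1) + 1) * s := by ring
    _ = j * s := by rw [hj]
  have hle : j * s ≤ L * s := Nat.mul_le_mul_right s hjL
  omega

lemma Fl_vtx {s L j k : ℕ} (hs : 1 ≤ s) (hj1 : 1 ≤ j) (hjL : j ≤ L) (hk : k < s) :
    Fl s L (1 + (j - 1) * s + k) = j := by
  have h2 : 1 + (j - 1) * s + k ≤ L * s := idx_le hj1 hjL hk
  unfold Fl
  rw [if_neg (by omega), if_pos h2]
  have he : (1 + (j - 1) * s + k) - 1 = s * (j - 1) + k := by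
    rw [mul_comm]; omega
  rw [he, Nat.mul_add_div (by omega), Nat.div_eq_of_lt hk]
  omega

/-- The sparsifier graph: complete bipartite between consecutive layers. -/
def sG (n s L : ℕ) : SimpleGraph (Fin n) where
  Adj a b := Fl s L a.1 = Fl s L b.1 + 1 ∨ Fl s L b.1 = Fl s L a.1 + 1
  symm := ⟨fun a b h => Or.symm h⟩
  loopless := ⟨fun a h => by rcases h with h | h <;> omega⟩

/-- The original graph: the sparsifier plus the edge `{u, v}`. -/
def bG (n s L : ℕ) : SimpleGraph (Fin n) where
  Adj a b := (Fl s L a.1 = Fl s L b.1 + 1 ∨ Fl s L b.1 = Fl s L a.1 + 1) ∨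
    ((Fl s L a.1 = 0 ∧ Fl s L b.1 = L + 1) ∨ (Fl s L a.1 = L + 1 ∧ Fl s L b.1 = 0))
  symm := ⟨fun a b h => by tauto⟩
  loopless := ⟨fun a h => by rcases h with (h | h) | (h | h) <;> omega⟩

lemma sG_adj {n s L : ℕ} {a b : Fin n} :
    (sG n s L).Adj a b ↔ (Fl s L a.1 = Fl s L b.1 + 1 ∨ Fl s L b.1 = Fl s L a.1 + 1) := Iff.rfl

lemma bG_adj {n s L : ℕ} {a b : Fin n} :
    (bG n s L).Adj a b ↔ ((Fl s L a.1 = Fl s L b.1 + 1 ∨ Fl s L b.1 = Fl s L a.1 + 1) ∨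
      ((Fl s L a.1 = 0 ∧ Fl s L b.1 = L + 1) ∨ (Fl s L a.1 = L + 1 ∧ Fl s L b.1 = 0))) := Iff.rfl

/-- Designated vertex at layer `j`, position `k` (valid when `1 ≤ j ≤ L`, `k < s`). -/
def vt (n s : ℕ) (hn : 0 < n) (j k : ℕ) : Fin n :=
  ⟨(1 + (j - 1) * s + k) % n, Nat.mod_lt _ hn⟩

lemma vt_val {n s j k : ℕ} (hn : 0 < n) (hlt : 1 + (j - 1) * s + k < n) :
    (vt n s hn j k).1 = 1 + (j - 1) * s + k := Nat.mod_eq_of_lt hlt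

lemma walk_bound {n s L : ℕ} {a b : Fin n} (p : (sG n s L).Walk a b) :
    Fl s L b.1 ≤ Fl s L a.1 + p.length ∧ Fl s L a.1 ≤ Fl s L b.1 + p.length := by
  induction p with
  | nil => simp
  | cons h q ih =>
    rw [sG_adj] at h
    rw [SimpleGraph.Walk.length_cons]
    obtain ⟨ih1, ih2⟩ := ih
    rcases h with h | h <;> constructor <;> omega

lemma lapQF_orient {V : Type*} [Fintype V] (H : SimpleGraph V) (x : V → ℝ) (P : V → V → Prop)
    [inst : ∀ a b, Decidable (P a b)]
    (hadj : ∀ a b, H.Adj a b ↔ P a b ∨ P b a) (hdisj : ∀ a b, P a b → ¬ P b a) :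
    lapQF H (fun _ _ => 1) x = ∑ a : V, ∑ b : V, if P a b then (x a - x b) ^ 2 else 0 := by
  unfold lapQF
  have h1 : ∀ a b : V, (if H.Adj a b then (1 : ℝ) * (x a - x b) ^ 2 else 0) =
      (if P a b then (x a - x b) ^ 2 else 0) + (if P b a then (x a - x b) ^ 2 else 0) := by
    intro a b
    by_cases hp : P a b
    · rw [if_pos hp, if_pos ((hadj a b).mpr (Or.inl hp)), if_neg (hdisj a b hp)]; ring
    · by_cases hq : P b a
      · rw [if_neg hp, if_pos ((hadj a b).mpr (Or.inr hq)), if_pos hq]; ring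
      · rw [if_neg hp, if_neg hq,
          if_neg (fun h => by rcases (hadj a b).mp h with h | h; exact hp h; exact hq h)]
        ring
  simp_rw [h1, Finset.sum_add_distrib]
  have h2 : (∑ a : V, ∑ b : V, if P b a then (x a - x b) ^ 2 else 0)
      = ∑ a : V, ∑ b : V, if P a b then (x a - x b) ^ 2 else 0 := by
    rw [Finset.sum_comm]
    refine Finset.sum_congr rfl fun a _ => Finset.sum_congr rfl fun b _ => ?_
    have e : (x b - x a) ^ 2 = (x a - x b) ^ 2 := by ring
    rw [e]
  rw [h2]; ring

noncomputable def mfun (s L : ℕ) (a b : ℝ) (y : ℕ → ℕ → ℝ) (j : ℕ) : ℝ :=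
  if j = 0 then a else if j ≤ L then (∑ k ∈ Finset.range s, y j k) / s else b

noncomputable def rfun (s L : ℕ) (j : ℕ) : ℝ :=
  if j = 0 ∨ j = L then 1 / (s : ℝ) else 1 / (s : ℝ) ^ 2

noncomputable def gfun (s L : ℕ) (a b : ℝ) (y : ℕ → ℕ → ℝ) (j : ℕ) : ℝ :=
  if j = 0 then ∑ k ∈ Finset.range s, (y 1 k - a) ^ 2
  else if j < L then ∑ k ∈ Finset.range s, ∑ k' ∈ Finset.range s, (y (j + 1) k - y j k') ^ 2
  else ∑ k ∈ Finset.range s, (b - y L k) ^ 2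

lemma rfun_nonneg (s L j : ℕ) : 0 ≤ rfun s L j := by
  unfold rfun; split_ifs <;> positivity

lemma gfun_nonneg (s L : ℕ) (a b : ℝ) (y : ℕ → ℕ → ℝ) (j : ℕ) :
    0 ≤ gfun s L a b y j := by
  unfold gfun; split_ifs <;> positivity

lemma gap_bound (s L : ℕ) (hs : 1 ≤ s) (hL : 1 ≤ L) (a b : ℝ) (y : ℕ → ℕ → ℝ)
    (j : ℕ) (hj : j ≤ L) :
    (mfun s L a b y j - mfun s L a b y (j + 1)) ^ 2 ≤ rfun s L j * gfun s L a b y j := by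
  have hs0 : (0 : ℝ) < (s : ℝ) := by exact_mod_cast hs
  rcases eq_or_ne j 0 with rfl | hj0
  · -- first gap
    have hm0 : mfun s L a b y 0 = a := by simp [mfun]
    have hm1 : mfun s L a b y 1 = (∑ k ∈ Finset.range s, y 1 k) / s := by
      simp only [mfun, if_neg one_ne_zero, if_pos hL]
    have hr : rfun s L 0 = 1 / (s : ℝ) := by simp [rfun]
    have hg : gfun s L a b y 0 = ∑ k ∈ Finset.range s, (y 1 k - a) ^ 2 := by simp [gfun]
    rw [hm0, hm1, hr, hg]
    have e1 : a - (∑ k ∈ Finset.range s, y 1 k) / s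
        = (∑ k ∈ Finset.range s, (a - y 1 k)) / s := by
      rw [Finset.sum_sub_distrib, Finset.sum_const, Finset.card_range]
      field_simp
      ring
    rw [e1, div_pow]
    have hcs := sq_sum_le_card_mul_sum_sq (s := Finset.range s)
      (f := fun k => a - y 1 k)
    rw [Finset.card_range] at hcs
    have e2 : ∑ k ∈ Finset.range s, (a - y 1 k) ^ 2
        = ∑ k ∈ Finset.range s, (y 1 k - a) ^ 2 :=
      Finset.sum_congr rfl fun k _ => by ring
    rw [e2] at hcs
    rw [div_le_iff₀ (by positivity), one_div, mul_comm ((s:ℝ)⁻¹) _, mul_assoc]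
    calc (∑ k ∈ Finset.range s, (a - y 1 k)) ^ 2
        ≤ (s : ℝ) * ∑ k ∈ Finset.range s, (y 1 k - a) ^ 2 := hcs
      _ = (∑ k ∈ Finset.range s, (y 1 k - a) ^ 2) * ((s:ℝ)⁻¹ * (s:ℝ)^2) := by
          field_simp
  · rcases eq_or_ne L j with rfl | hjL
    · -- last gap
      have hm0 : mfun s L a b y L = (∑ k ∈ Finset.range s, y L k) / s := by
        simp only [mfun, if_neg (by omega : ¬ L = 0), if_pos le_rfl]
      have hm1 : mfun s L a b y (L + 1) = b := by
        simp only [mfun, if_neg (by omega : ¬ L + 1 = 0), if_neg (by omega : ¬ L + 1 ≤ L)]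
      have hr : rfun s L L = 1 / (s : ℝ) := by simp [rfun]
      have hg : gfun s L a b y L = ∑ k ∈ Finset.range s, (b - y L k) ^ 2 := by
        simp only [gfun, if_neg (by omega : ¬ L = 0), if_neg (by omega : ¬ L < L)]
      rw [hm0, hm1, hr, hg]
      have e1 : (∑ k ∈ Finset.range s, y L k) / s - b
          = (∑ k ∈ Finset.range s, (y L k - b)) / s := by
        rw [Finset.sum_sub_distrib, Finset.sum_const, Finset.card_range]
        field_simp
        rw [nsmul_eq_mul]
      rw [e1, div_pow]
      have hcs := sq_sum_le_card_mul_sum_sq (s := Finset.range s)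
        (f := fun k => y L k - b)
      rw [Finset.card_range] at hcs
      have e2 : ∑ k ∈ Finset.range s, (y L k - b) ^ 2
          = ∑ k ∈ Finset.range s, (b - y L k) ^ 2 :=
        Finset.sum_congr rfl fun k _ => by ring
      rw [e2] at hcs
      rw [div_le_iff₀ (by positivity), one_div, mul_comm ((s:ℝ)⁻¹) _, mul_assoc]
      calc (∑ k ∈ Finset.range s, (y L k - b)) ^ 2
          ≤ (s : ℝ) * ∑ k ∈ Finset.range s, (b - y L k) ^ 2 := hcs
        _ = (∑ k ∈ Finset.range s, (b - y L k) ^ 2) * ((s:ℝ)⁻¹ * (s:ℝ)^2) := by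
            field_simp
    · -- middle gap: 1 ≤ j < L
      have hjL' : j < L := lt_of_le_of_ne hj (Ne.symm hjL)
      have hm0 : mfun s L a b y j = (∑ k ∈ Finset.range s, y j k) / s := by
        simp only [mfun, if_neg hj0, if_pos hj]
      have hm1 : mfun s L a b y (j + 1) = (∑ k ∈ Finset.range s, y (j + 1) k) / s := by
        simp only [mfun, if_neg (by omega : ¬ j + 1 = 0), if_pos (by omega : j + 1 ≤ L)]
      have hr : rfun s L j = 1 / (s : ℝ) ^ 2 := by
        simp only [rfun, if_neg (by omega : ¬ (j = 0 ∨ j = L))]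
      have hg : gfun s L a b y j
          = ∑ k ∈ Finset.range s, ∑ k' ∈ Finset.range s, (y (j + 1) k - y j k') ^ 2 := by
        simp only [gfun, if_neg hj0, if_pos hjL']
      rw [hm0, hm1, hr, hg]
      have e1 : (∑ k ∈ Finset.range s, y j k) / s - (∑ k ∈ Finset.range s, y (j + 1) k) / s
          = (∑ p ∈ Finset.range s ×ˢ Finset.range s, (y j p.2 - y (j + 1) p.1)) / (s : ℝ) ^ 2 := by
        rw [Finset.sum_product]
        simp only [Finset.sum_sub_distrib, Finset.sum_const, Finset.card_range, nsmul_eq_mul]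
        field_simp
        rw [← Finset.mul_sum]
        ring
      rw [e1, div_pow]
      have hcs := sq_sum_le_card_mul_sum_sq (s := Finset.range s ×ˢ Finset.range s)
        (f := fun p => y j p.2 - y (j + 1) p.1)
      rw [Finset.card_product, Finset.card_range] at hcs
      have e2 : ∑ p ∈ Finset.range s ×ˢ Finset.range s, (y j p.2 - y (j + 1) p.1) ^ 2
          = ∑ k ∈ Finset.range s, ∑ k' ∈ Finset.range s, (y (j + 1) k - y j k') ^ 2 := by
        rw [Finset.sum_product]
        exact Finset.sum_congr rfl fun k _ => Finset.sum_congr rfl fun k' _ => by ring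
      rw [e2] at hcs
      rw [div_le_iff₀ (by positivity), one_div, mul_comm (((s:ℝ)^2)⁻¹) _, mul_assoc]
      calc (∑ p ∈ Finset.range s ×ˢ Finset.range s, (y j p.2 - y (j + 1) p.1)) ^ 2
          ≤ ((s * s : ℕ) : ℝ) *
              ∑ k ∈ Finset.range s, ∑ k' ∈ Finset.range s, (y (j + 1) k - y j k') ^ 2 := hcs
        _ = (∑ k ∈ Finset.range s, ∑ k' ∈ Finset.range s, (y (j + 1) k - y j k') ^ 2) *
              (((s:ℝ)^2)⁻¹ * ((s:ℝ)^2)^2) := by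
            push_cast
            field_simp

lemma key (s L : ℕ) (hs : 1 ≤ s) (hL : 1 ≤ L) (a b : ℝ) (y : ℕ → ℕ → ℝ) :
    (a - b) ^ 2 ≤ (2 / (s : ℝ) + ((L : ℝ) - 1) / (s : ℝ) ^ 2) *
      ((∑ k ∈ Finset.range s, (y 1 k - a) ^ 2)
        + (∑ j ∈ Finset.range (L - 1), ∑ k ∈ Finset.range s, ∑ k' ∈ Finset.range s,
            (y (j + 2) k - y (j + 1) k') ^ 2)
        + (∑ k ∈ Finset.range s, (b - y L k) ^ 2)) := by
  obtain ⟨L', rfl⟩ : ∃ L', L = L' + 1 := ⟨L - 1, by omega⟩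
  set L := L' + 1 with hLdef
  have hs0 : (0 : ℝ) < (s : ℝ) := by exact_mod_cast hs
  -- telescoping
  have tele : ∑ j ∈ Finset.range (L + 1),
      (mfun s L a b y j - mfun s L a b y (j + 1)) = a - b := by
    rw [Finset.sum_range_sub' (f := mfun s L a b y)]
    have h0 : mfun s L a b y 0 = a := by simp [mfun]
    have h1 : mfun s L a b y (L + 1) = b := by
      simp only [mfun, if_neg (by omega : ¬ L + 1 = 0), if_neg (by omega : ¬ L + 1 ≤ L)]
    rw [h0, h1]
  -- sum of resistances
  have sumr : ∑ j ∈ Finset.range (L + 1), rfun s L j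
      = 2 / (s : ℝ) + ((L : ℝ) - 1) / (s : ℝ) ^ 2 := by
    rw [Finset.sum_range_succ', Finset.sum_range_succ]
    have h0 : rfun s L 0 = 1 / (s : ℝ) := by simp [rfun]
    have hl : rfun s L (L' + 1) = 1 / (s : ℝ) := by simp [rfun, hLdef]
    have hm : ∀ i ∈ Finset.range L', rfun s L (i + 1) = 1 / (s : ℝ) ^ 2 := by
      intro i hi
      rw [Finset.mem_range] at hi
      simp only [rfun, if_neg (by omega : ¬ (i + 1 = 0 ∨ i + 1 = L))]
    rw [Finset.sum_congr rfl hm, Finset.sum_const, Finset.card_range, h0, hl]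
    have : ((L : ℝ) - 1) = (L' : ℝ) := by push_cast [hLdef]; ring
    rw [this, nsmul_eq_mul]
    ring
  -- sum of gap sums
  have sumg : ∑ j ∈ Finset.range (L + 1), gfun s L a b y j
      = (∑ k ∈ Finset.range s, (y 1 k - a) ^ 2)
        + (∑ j ∈ Finset.range (L - 1), ∑ k ∈ Finset.range s, ∑ k' ∈ Finset.range s,
            (y (j + 2) k - y (j + 1) k') ^ 2)
        + (∑ k ∈ Finset.range s, (b - y L k) ^ 2) := by
    rw [Finset.sum_range_succ', Finset.sum_range_succ]
    have h0 : gfun s L a b y 0 = ∑ k ∈ Finset.range s, (y 1 k - a) ^ 2 := by simp [gfun]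
    have hl : gfun s L a b y (L' + 1) = ∑ k ∈ Finset.range s, (b - y L k) ^ 2 := by
      simp only [gfun, if_neg (by omega : ¬ L' + 1 = 0), if_neg (by omega : ¬ L' + 1 < L)]
    have hm : ∀ i ∈ Finset.range L', gfun s L a b y (i + 1)
        = ∑ k ∈ Finset.range s, ∑ k' ∈ Finset.range s, (y (i + 2) k - y (i + 1) k') ^ 2 := by
      intro i hi
      rw [Finset.mem_range] at hi
      simp only [gfun, if_neg (by omega : ¬ i + 1 = 0), if_pos (by omega : i + 1 < L)]
    rw [Finset.sum_congr rfl hm, h0, hl]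
    have hL' : L - 1 = L' := by omega
    rw [hL']
    ring
  -- Cauchy-Schwarz chaining
  have habs : |a - b| ≤ ∑ j ∈ Finset.range (L + 1),
      Real.sqrt (rfun s L j * gfun s L a b y j) := by
    calc |a - b| = |∑ j ∈ Finset.range (L + 1),
        (mfun s L a b y j - mfun s L a b y (j + 1))| := by rw [tele]
      _ ≤ ∑ j ∈ Finset.range (L + 1), |mfun s L a b y j - mfun s L a b y (j + 1)| :=
          Finset.abs_sum_le_sum_abs _ _
      _ ≤ ∑ j ∈ Finset.range (L + 1), Real.sqrt (rfun s L j * gfun s L a b y j) := by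
          refine Finset.sum_le_sum fun j hj => ?_
          rw [Finset.mem_range] at hj
          exact Real.abs_le_sqrt (gap_bound s L hs hL a b y j (by omega))
  have hcs2 : (∑ j ∈ Finset.range (L + 1), Real.sqrt (rfun s L j * gfun s L a b y j)) ^ 2
      ≤ (∑ j ∈ Finset.range (L + 1), rfun s L j) *
        (∑ j ∈ Finset.range (L + 1), gfun s L a b y j) := by
    refine Finset.sum_sq_le_sum_mul_sum_of_sq_eq_mul _ (fun j _ => rfun_nonneg s L j)
      (fun j _ => gfun_nonneg s L a b y j) (fun j _ => ?_)
    exact Real.sq_sqrt (mul_nonneg (rfun_nonneg s L j) (gfun_nonneg s L a b y j))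
  calc (a - b) ^ 2 = |a - b| ^ 2 := (sq_abs _).symm
    _ ≤ (∑ j ∈ Finset.range (L + 1), Real.sqrt (rfun s L j * gfun s L a b y j)) ^ 2 := by
        exact pow_le_pow_left₀ (abs_nonneg _) habs 2
    _ ≤ (∑ j ∈ Finset.range (L + 1), rfun s L j) *
        (∑ j ∈ Finset.range (L + 1), gfun s L a b y j) := hcs2
    _ = _ := by rw [sumr, sumg]

lemma main_construct (eps : ℝ) (heps0 : 0 < eps) (n s L : ℕ)
    (hs1 : 1 ≤ s) (hL1 : 1 ≤ L) (hn : 2 + L * s ≤ n)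
    (hr : 2 / (s : ℝ) + ((L : ℝ) - 1) / (s : ℝ) ^ 2 ≤ eps) :
    ∃ (G H : SimpleGraph (Fin n)) (w : Fin n → Fin n → ℝ),
      IsSpectralSparsifier G H w eps ∧
      ∃ u v : Fin n, G.Adj u v ∧ ¬ H.Adj u v ∧ L + 1 ≤ H.dist u v := by
  have hLs : 1 ≤ L * s := Nat.one_le_iff_ne_zero.mpr (Nat.mul_ne_zero (by omega) (by omega))
  have hn0 : 0 < n := by omega
  have hvtval : ∀ j k : ℕ, 1 ≤ j → j ≤ L → k < s → (vt n s hn0 j k).1 = 1 + (j - 1) * s + k :=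
    fun j k hj1 hjL hk => vt_val hn0 (lt_of_lt_of_le (Nat.lt_succ_of_le (idx_le hj1 hjL hk)) (by omega))
  have hFvt : ∀ j k : ℕ, 1 ≤ j → j ≤ L → k < s → Fl s L (vt n s hn0 j k).1 = j := by
    intro j k hj1 hjL hk
    rw [hvtval j k hj1 hjL hk]
    exact Fl_vtx hs1 hj1 hjL hk
  set u : Fin n := ⟨0, by omega⟩ with hu
  set v : Fin n := ⟨L * s + 1, by omega⟩ with hv
  have hFu : Fl s L u.1 = 0 := Fl_zero s L
  have hFv : Fl s L v.1 = L + 1 := Fl_top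
  have hchar0 : ∀ p : Fin n, (Fl s L p.1 = 0 ↔ p = u) := by
    intro p
    rw [Fl_eq_zero_iff, Fin.ext_iff]
  have hcharT : ∀ p : Fin n, (Fl s L p.1 = L + 1 ↔ p = v) := by
    intro p
    rw [Fl_eq_top_iff hs1 hL1, Fin.ext_iff]
  refine ⟨bG n s L, sG n s L, fun _ _ => 1, ?_, u, v, ?_, ?_, ?_⟩
  · -- spectral sparsifier
    refine ⟨fun a b h => Or.inl h, fun _ _ _ => one_pos, fun _ _ => rfl, fun x => ?_⟩
    have hQH := lapQF_orient (sG n s L) x (fun a b => Fl s L a.1 = Fl s L b.1 + 1)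
      (fun a b => sG_adj) (fun a b h h' => by omega)
    beta_reduce at hQH
    have hQG := lapQF_orient (bG n s L) x
      (fun a b => Fl s L a.1 = Fl s L b.1 + 1 ∨ (Fl s L a.1 = L + 1 ∧ Fl s L b.1 = 0))
      (fun a b => by rw [bG_adj]; tauto)
      (fun a b h h' => by rcases h with h | h <;> rcases h' with h' | h' <;> omega)
    beta_reduce at hQG
    -- split off the extra edge
    have hsplit : ∀ a b : Fin n,
        (if (Fl s L a.1 = Fl s L b.1 + 1 ∨ (Fl s L a.1 = L + 1 ∧ Fl s L b.1 = 0))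
          then (x a - x b) ^ 2 else 0)
        = (if Fl s L a.1 = Fl s L b.1 + 1 then (x a - x b) ^ 2 else 0)
          + (if a = v ∧ b = u then (x a - x b) ^ 2 else 0) := by
      intro a b
      by_cases h1 : Fl s L a.1 = Fl s L b.1 + 1
      · rw [if_pos (Or.inl h1), if_pos h1, if_neg, add_zero]
        rintro ⟨rfl, rfl⟩
        rw [hFu, hFv] at h1
        omega
      · by_cases h2 : a = v ∧ b = u
        · obtain ⟨rfl, rfl⟩ := h2
          rw [if_pos (Or.inr ⟨hFv, hFu⟩), if_neg h1, if_pos ⟨rfl, rfl⟩, zero_add]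
        · rw [if_neg, if_neg h1, if_neg h2, add_zero]
          rintro (h | h)
          · exact h1 h
          · exact h2 ⟨(hcharT a).mp h.1, (hchar0 b).mp h.2⟩
    have hQG' : lapQF (bG n s L) (fun _ _ => 1) x
        = (∑ a : Fin n, ∑ b : Fin n, if Fl s L a.1 = Fl s L b.1 + 1 then (x a - x b) ^ 2 else 0)
          + (x v - x u) ^ 2 := by
      rw [hQG]
      simp_rw [hsplit, Finset.sum_add_distrib]
      congr 1
      have hrow : ∀ a : Fin n, (∑ b : Fin n, if a = v ∧ b = u then (x a - x b) ^ 2 else 0)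
          = if a = v then (x a - x u) ^ 2 else 0 := by
        intro a
        by_cases ha : a = v
        · subst ha
          rw [if_pos rfl]
          simp only [eq_self_iff_true, true_and]
          rw [Finset.sum_ite_eq' Finset.univ u (fun b => (x v - x b) ^ 2)]
          simp
        · rw [if_neg ha]
          apply Finset.sum_eq_zero
          intro b _
          rw [if_neg (fun h => ha h.1)]
      simp_rw [hrow]
      simp [Finset.sum_ite_eq']
    set TH := ∑ a : Fin n, ∑ b : Fin n,
      if Fl s L a.1 = Fl s L b.1 + 1 then (x a - x b) ^ 2 else 0 with hTHdef
    have hTHnn : 0 ≤ TH := by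
      rw [hTHdef]
      apply Finset.sum_nonneg
      intro a _
      apply Finset.sum_nonneg
      intro b _
      split_ifs
      · exact sq_nonneg _
      · exact le_rfl
    -- the layered sum is at most TH
    have hSle : (∑ k ∈ Finset.range s, (x (vt n s hn0 1 k) - x u) ^ 2)
        + (∑ j ∈ Finset.range (L - 1), ∑ k ∈ Finset.range s, ∑ k' ∈ Finset.range s,
            (x (vt n s hn0 (j + 2) k) - x (vt n s hn0 (j + 1) k')) ^ 2)
        + (∑ k ∈ Finset.range s, (x v - x (vt n s hn0 L k)) ^ 2) ≤ TH := by
      set D : Fin n × Fin n → ℝ := fun p => (x p.1 - x p.2) ^ 2 with hD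
      set Pr : Fin n × Fin n → Prop := fun p => Fl s L p.1.1 = Fl s L p.2.1 + 1 with hPr
      have hTH2 : TH = ∑ p ∈ (Finset.univ ×ˢ Finset.univ).filter Pr, D p := by
        rw [hTHdef, ← Finset.sum_product', ← Finset.sum_filter]
      set E0 : Finset (Fin n × Fin n) :=
        (Finset.range s).image (fun k => (vt n s hn0 1 k, u)) with hE0
      set E1 : Finset (Fin n × Fin n) :=
        ((Finset.range (L - 1)) ×ˢ (Finset.range s ×ˢ Finset.range s)).image
          (fun q => (vt n s hn0 (q.1 + 2) q.2.1, vt n s hn0 (q.1 + 1) q.2.2)) with hE1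
      set E2 : Finset (Fin n × Fin n) :=
        (Finset.range s).image (fun k => (v, vt n s hn0 L k)) with hE2
      have hinj0 : ∀ a ∈ Finset.range s, ∀ b ∈ Finset.range s,
          (vt n s hn0 1 a, u) = (vt n s hn0 1 b, u) → a = b := by
        intro k hk k' hk' heq
        rw [Finset.mem_range] at hk hk'
        have h1 := congrArg (fun p => (Prod.fst p).1) heq
        simp only at h1
        rw [hvtval 1 k le_rfl hL1 hk, hvtval 1 k' le_rfl hL1 hk'] at h1
        omega
      have hinj2 : ∀ a ∈ Finset.range s, ∀ b ∈ Finset.range s,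
          (v, vt n s hn0 L a) = (v, vt n s hn0 L b) → a = b := by
        intro k hk k' hk' heq
        rw [Finset.mem_range] at hk hk'
        have h1 := congrArg (fun p => (Prod.snd p).1) heq
        simp only at h1
        rw [hvtval L k hL1 le_rfl hk, hvtval L k' hL1 le_rfl hk'] at h1
        omega
      have hinj1 : ∀ a ∈ (Finset.range (L - 1)) ×ˢ (Finset.range s ×ˢ Finset.range s),
          ∀ b ∈ (Finset.range (L - 1)) ×ˢ (Finset.range s ×ˢ Finset.range s),
          (vt n s hn0 (a.1 + 2) a.2.1, vt n s hn0 (a.1 + 1) a.2.2)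
            = (vt n s hn0 (b.1 + 2) b.2.1, vt n s hn0 (b.1 + 1) b.2.2) → a = b := by
        rintro ⟨j, k1, k2⟩ hq ⟨j', k1', k2'⟩ hq' heq
        simp only [Finset.mem_product, Finset.mem_range] at hq hq'
        obtain ⟨hj, hk1, hk2⟩ := hq
        obtain ⟨hj', hk1', hk2'⟩ := hq'
        have hfst := congrArg (fun p => Fl s L (Prod.fst p).1) heq
        simp only at hfst
        rw [hFvt (j + 2) k1 (by omega) (by omega) hk1,
          hFvt (j' + 2) k1' (by omega) (by omega) hk1'] at hfst
        have hjj : j = j' := by omega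
        subst hjj
        have h1 := congrArg (fun p => (Prod.fst p).1) heq
        have h2 := congrArg (fun p => (Prod.snd p).1) heq
        simp only at h1 h2
        rw [hvtval (j + 2) k1 (by omega) (by omega) hk1,
          hvtval (j + 2) k1' (by omega) (by omega) hk1'] at h1
        rw [hvtval (j + 1) k2 (by omega) (by omega) hk2,
          hvtval (j + 1) k2' (by omega) (by omega) hk2'] at h2
        simp only [Prod.mk.injEq]
        exact ⟨trivial, by omega, by omega⟩
      have hsum0 : ∑ p ∈ E0, D p
          = ∑ k ∈ Finset.range s, (x (vt n s hn0 1 k) - x u) ^ 2 := by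
        rw [hE0, Finset.sum_image hinj0]
      have hsum2 : ∑ p ∈ E2, D p
          = ∑ k ∈ Finset.range s, (x v - x (vt n s hn0 L k)) ^ 2 := by
        rw [hE2, Finset.sum_image hinj2]
      have hsum1 : ∑ p ∈ E1, D p
          = ∑ j ∈ Finset.range (L - 1), ∑ k ∈ Finset.range s, ∑ k' ∈ Finset.range s,
            (x (vt n s hn0 (j + 2) k) - x (vt n s hn0 (j + 1) k')) ^ 2 := by
        rw [hE1, Finset.sum_image hinj1, Finset.sum_product]
        refine Finset.sum_congr rfl fun j hj => ?_
        rw [Finset.sum_product]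
      have hd01 : Disjoint E0 E1 := by
        rw [Finset.disjoint_left]
        rintro p hp hp'
        rw [hE0, Finset.mem_image] at hp
        rw [hE1, Finset.mem_image] at hp'
        obtain ⟨k, hk, rfl⟩ := hp
        obtain ⟨⟨j, k1, k2⟩, hq, heq⟩ := hp'
        simp only [Finset.mem_product, Finset.mem_range] at hq
        have h2 := congrArg (fun p => Fl s L (Prod.snd p).1) heq
        simp only at h2
        rw [hFvt (j + 1) k2 (by omega) (by omega) hq.2.2, hFu] at h2
        omega
      have hd02 : Disjoint E0 E2 := by
        rw [Finset.disjoint_left]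
        rintro p hp hp'
        rw [hE0, Finset.mem_image] at hp
        rw [hE2, Finset.mem_image] at hp'
        obtain ⟨k, hk, rfl⟩ := hp
        obtain ⟨k', hk', heq⟩ := hp'
        have h2 := congrArg (fun p => Fl s L (Prod.snd p).1) heq
        simp only at h2
        rw [Finset.mem_range] at hk'
        rw [hFvt L k' hL1 le_rfl hk', hFu] at h2
        omega
      have hd12 : Disjoint E1 E2 := by
        rw [Finset.disjoint_left]
        rintro p hp hp'
        rw [hE1, Finset.mem_image] at hp
        rw [hE2, Finset.mem_image] at hp'
        obtain ⟨⟨j, k1, k2⟩, hq, rfl⟩ := hp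
        obtain ⟨k', hk', heq⟩ := hp'
        simp only [Finset.mem_product, Finset.mem_range] at hq
        have h2 := congrArg (fun p => Fl s L (Prod.fst p).1) heq
        simp only at h2
        rw [hFvt (j + 2) k1 (by omega) (by omega) hq.2.1, hFv] at h2
        omega
      have hsub : E0 ∪ E1 ∪ E2 ⊆ (Finset.univ ×ˢ Finset.univ).filter Pr := by
        intro p hp
        refine Finset.mem_filter.mpr ⟨Finset.mem_product.mpr ⟨Finset.mem_univ _, Finset.mem_univ _⟩, ?_⟩
        rw [Finset.mem_union, Finset.mem_union] at hp
        rcases hp with (hp | hp) | hp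
        · rw [hE0, Finset.mem_image] at hp
          obtain ⟨k, hk, rfl⟩ := hp
          rw [Finset.mem_range] at hk
          show Fl s L (vt n s hn0 1 k).1 = Fl s L u.1 + 1
          rw [hFvt 1 k le_rfl hL1 hk, hFu]
        · rw [hE1, Finset.mem_image] at hp
          obtain ⟨⟨j, k1, k2⟩, hq, rfl⟩ := hp
          simp only [Finset.mem_product, Finset.mem_range] at hq
          show Fl s L (vt n s hn0 (j + 2) k1).1 = Fl s L (vt n s hn0 (j + 1) k2).1 + 1
          rw [hFvt (j + 2) k1 (by omega) (by omega) hq.2.1,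
            hFvt (j + 1) k2 (by omega) (by omega) hq.2.2]
        · rw [hE2, Finset.mem_image] at hp
          obtain ⟨k, hk, rfl⟩ := hp
          rw [Finset.mem_range] at hk
          show Fl s L v.1 = Fl s L (vt n s hn0 L k).1 + 1
          rw [hFvt L k hL1 le_rfl hk, hFv]
      calc (∑ k ∈ Finset.range s, (x (vt n s hn0 1 k) - x u) ^ 2)
            + (∑ j ∈ Finset.range (L - 1), ∑ k ∈ Finset.range s, ∑ k' ∈ Finset.range s,
                (x (vt n s hn0 (j + 2) k) - x (vt n s hn0 (j + 1) k')) ^ 2)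
            + (∑ k ∈ Finset.range s, (x v - x (vt n s hn0 L k)) ^ 2)
          = ∑ p ∈ E0 ∪ E1 ∪ E2, D p := by
            rw [Finset.sum_union (Finset.disjoint_union_left.mpr ⟨hd02, hd12⟩),
              Finset.sum_union hd01, hsum0, hsum1, hsum2]
        _ ≤ ∑ p ∈ (Finset.univ ×ˢ Finset.univ).filter Pr, D p :=
            Finset.sum_le_sum_of_subset_of_nonneg hsub
              (fun p _ _ => sq_nonneg (x p.1 - x p.2))
        _ = TH := hTH2.symm
    have hrnn : 0 ≤ 2 / (s : ℝ) + ((L : ℝ) - 1) / (s : ℝ) ^ 2 := by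
      have h1 : (1 : ℝ) ≤ (L : ℝ) := by exact_mod_cast hL1
      have h2 : (0 : ℝ) < (s : ℝ) := by exact_mod_cast hs1
      have h3 : (0 : ℝ) ≤ (L : ℝ) - 1 := by linarith
      have h4 : (0 : ℝ) ≤ 2 / (s : ℝ) := by positivity
      exact add_nonneg h4 (div_nonneg h3 (by positivity))
    have hd : (x u - x v) ^ 2 ≤ eps * TH := by
      calc (x u - x v) ^ 2
          ≤ (2 / (s : ℝ) + ((L : ℝ) - 1) / (s : ℝ) ^ 2) *
            ((∑ k ∈ Finset.range s, (x (vt n s hn0 1 k) - x u) ^ 2)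
            + (∑ j ∈ Finset.range (L - 1), ∑ k ∈ Finset.range s, ∑ k' ∈ Finset.range s,
                (x (vt n s hn0 (j + 2) k) - x (vt n s hn0 (j + 1) k')) ^ 2)
            + (∑ k ∈ Finset.range s, (x v - x (vt n s hn0 L k)) ^ 2)) :=
            key s L hs1 hL1 (x u) (x v) (fun j k => x (vt n s hn0 j k))
        _ ≤ (2 / (s : ℝ) + ((L : ℝ) - 1) / (s : ℝ) ^ 2) * TH :=
            mul_le_mul_of_nonneg_left hSle hrnn
        _ ≤ eps * TH := mul_le_mul_of_nonneg_right hr hTHnn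
    rw [hQH, hQG']
    constructor
    · nlinarith [mul_nonneg heps0.le hTHnn, sq_nonneg (x v - x u)]
    · have e : (x v - x u) ^ 2 = (x u - x v) ^ 2 := by ring
      rw [e]
      linarith [hd]
  · rw [bG_adj]; right; left; exact ⟨hFu, hFv⟩
  · rw [sG_adj, hFu, hFv]; omega
  · -- distance lower bound
    have hadj_step : ∀ j, 1 ≤ j → j + 1 ≤ L →
        (sG n s L).Adj (vt n s hn0 j 0) (vt n s hn0 (j + 1) 0) := by
      intro j h1 h2
      rw [sG_adj, hFvt j 0 h1 (by omega) (by omega), hFvt (j + 1) 0 (by omega) h2 (by omega)]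
      omega
    have hadj_u1 : (sG n s L).Adj u (vt n s hn0 1 0) := by
      rw [sG_adj, hFu, hFvt 1 0 le_rfl hL1 (by omega)]; omega
    have hadj_Lv : (sG n s L).Adj (vt n s hn0 L 0) v := by
      rw [sG_adj, hFv, hFvt L 0 hL1 le_rfl (by omega)]; omega
    have hreach : (sG n s L).Reachable u v := by
      have step : ∀ j, 1 ≤ j → j ≤ L → (sG n s L).Reachable u (vt n s hn0 j 0) := by
        intro j
        induction j with
        | zero => exact fun h => absurd h (by omega)
        | succ j ih =>
          intro h1 hjL
          rcases Nat.eq_zero_or_pos j with rfl | hj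
          · exact hadj_u1.reachable
          · exact (ih (by omega) (by omega)).trans (hadj_step j hj (by omega)).reachable
      exact (step L hL1 le_rfl).trans hadj_Lv.reachable
    obtain ⟨p, hp⟩ := hreach.exists_walk_length_eq_dist
    have hb := walk_bound p
    rw [hFu, hFv] at hb
    omega


end Stmt10Aux

set_option maxHeartbeats 1000000 in
/-- tightness of the `n^(2/3)` bound. For every `eps ∈ (0,1)` there is a
constant `c > 0` such that for all sufficiently large `n` there are an `n`-vertex unweighted
graph `G`, a `(1 ± eps)`-spectral sparsifier `H` of `G`, and an edge `{u,v}` of `G` absent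
from `H` with `d_{Ĥ}(u,v) ≥ c * n^(2/3) / log n`. -/
theorem stmt10 :
    ∀ eps : ℝ, 0 < eps → eps < 1 →
      ∃ c : ℝ, 0 < c ∧
        ∃ N : ℕ, ∀ n : ℕ, N ≤ n →
          ∃ (G H : SimpleGraph (Fin n)) (w : Fin n → Fin n → ℝ),
            IsSpectralSparsifier G H w eps ∧
            ∃ u v : Fin n, G.Adj u v ∧ ¬ H.Adj u v ∧
              c * (n : ℝ) ^ ((2 : ℝ) / 3) / Real.log n ≤ (H.dist u v : ℝ) := by
  intro eps heps0 heps1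
  refine ⟨eps / 16, by positivity, ?_⟩
  set M : ℕ := ⌈(8 : ℝ) / eps⌉₊ + 2 with hM
  have hM8 : 10 ≤ M := by
    have h1 : (7 : ℝ) < 8 / eps := by
      rw [lt_div_iff₀ heps0]; nlinarith
    have h2 : 7 < ⌈(8 : ℝ) / eps⌉₊ := by
      rw [Nat.lt_ceil]; exact_mod_cast h1
    omega
  have hMeps : (8 : ℝ) / eps ≤ (M : ℝ) := by
    calc (8 : ℝ) / eps ≤ (⌈(8 : ℝ) / eps⌉₊ : ℝ) := Nat.le_ceil _
    _ ≤ (M : ℝ) := by rw [hM]; push_cast; linarith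
  refine ⟨(M + 1) ^ 3, ?_⟩
  intro n hn
  -- basic size facts
  have hn1331 : 1331 ≤ n := by
    calc 1331 = 11 ^ 3 := by norm_num
    _ ≤ (M + 1) ^ 3 := Nat.pow_le_pow_left (by omega) 3
    _ ≤ n := hn
  have hnR : (((M : ℝ)) + 1) ^ 3 ≤ (n : ℝ) := by exact_mod_cast hn
  have hn0R : (0 : ℝ) < (n : ℝ) := by positivity
  -- cube root facts
  set t : ℝ := (n : ℝ) ^ ((1 : ℝ) / 3) with ht
  have ht0 : 0 < t := Real.rpow_pos_of_pos hn0R _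
  have htM : (M : ℝ) + 1 ≤ t := by
    have h1 : (((M + 1) : ℝ) ^ 3) ^ ((1 : ℝ) / 3) ≤ t := by
      rw [ht]
      exact Real.rpow_le_rpow (by positivity) hnR (by norm_num)
    calc (M : ℝ) + 1 = (((M + 1) : ℝ) ^ (3 : ℕ)) ^ ((1 : ℝ) / 3) := by
          rw [← Real.rpow_natCast ((M : ℝ) + 1) 3, ← Real.rpow_mul (by positivity)]
          norm_num
      _ ≤ t := h1
  have ht3 : t ^ (3 : ℕ) = (n : ℝ) := by
    rw [ht, ← Real.rpow_natCast (((n : ℝ)) ^ ((1 : ℝ) / 3)) 3, ← Real.rpow_mul (by positivity)]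
    norm_num
  -- choose s and L
  set s : ℕ := ⌊t⌋₊ with hsdef
  have hsle : (s : ℝ) ≤ t := Nat.floor_le ht0.le
  have hsgt : t < (s : ℝ) + 1 := Nat.lt_floor_add_one t
  have hsM : M ≤ s := by
    have : (M : ℝ) ≤ t := by linarith
    exact Nat.le_floor this
  have hs1 : 1 ≤ s := by omega
  have hs1R : (1 : ℝ) ≤ (s : ℝ) := by exact_mod_cast hs1
  have hs0R : (0 : ℝ) < (s : ℝ) := by exact_mod_cast hs1
  have hseps : (8 : ℝ) / eps ≤ (s : ℝ) := by
    have : (M : ℝ) ≤ (s : ℝ) := by exact_mod_cast hsM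
    linarith
  have heps_s : 8 ≤ eps * (s : ℝ) := by
    rw [div_le_iff₀ heps0] at hseps
    linarith
  set L : ℕ := ⌊eps * (s : ℝ) ^ 2 / 4⌋₊ with hLdef
  have hLle : (L : ℝ) ≤ eps * (s : ℝ) ^ 2 / 4 := Nat.floor_le (by positivity)
  have hLgt : eps * (s : ℝ) ^ 2 / 4 < (L : ℝ) + 1 := by
    have := Nat.lt_floor_add_one (eps * (s : ℝ) ^ 2 / 4)
    rw [← hLdef] at this
    exact_mod_cast this
  have hL1 : 1 ≤ L := by
    rw [hLdef]
    apply Nat.le_floor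
    have h8s : 8 * (s : ℝ) ≤ eps * (s : ℝ) * (s : ℝ) :=
      mul_le_mul_of_nonneg_right heps_s hs0R.le
    push_cast
    nlinarith [hs1R]
  have hL1R : (1 : ℝ) ≤ (L : ℝ) := by exact_mod_cast hL1
  -- size constraint
  have hs3 : (s : ℝ) ^ 3 ≤ (n : ℝ) := by
    calc (s : ℝ) ^ 3 ≤ t ^ 3 := pow_le_pow_left₀ hs0R.le hsle 3
    _ = (n : ℝ) := ht3
  have hn2 : 2 + L * s ≤ n := by
    have h1 : ((L : ℝ)) * (s : ℝ) ≤ (s : ℝ) ^ 3 / 4 := by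
      have ha : (L : ℝ) * (s : ℝ) ≤ (eps * (s : ℝ) ^ 2 / 4) * (s : ℝ) :=
        mul_le_mul_of_nonneg_right hLle hs0R.le
      have hb : (eps * (s : ℝ) ^ 2 / 4) * (s : ℝ) ≤ (s : ℝ) ^ 3 / 4 := by
        nlinarith [mul_nonneg (by linarith : (0 : ℝ) ≤ 1 - eps) (pow_nonneg hs0R.le 3)]
      linarith
    have h2 : (2 : ℝ) + (L : ℝ) * (s : ℝ) ≤ (n : ℝ) := by
      have hn1331R : (1331 : ℝ) ≤ (n : ℝ) := by exact_mod_cast hn1331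
      nlinarith [hs3]
    have : ((2 + L * s : ℕ) : ℝ) ≤ (n : ℝ) := by push_cast; linarith
    exact_mod_cast this
  -- resistance constraint
  have hr : 2 / (s : ℝ) + ((L : ℝ) - 1) / (s : ℝ) ^ 2 ≤ eps := by
    have h1 : 2 / (s : ℝ) ≤ eps / 4 := by
      rw [div_le_iff₀ hs0R]
      linarith [heps_s]
    have h2 : ((L : ℝ) - 1) / (s : ℝ) ^ 2 ≤ eps / 4 := by
      rw [div_le_iff₀ (by positivity)]
      linarith [hLle]
    linarith
  clear_value M t s L
  obtain ⟨G, H, w, hsp, u, v, hGadj, hHadj, hdist⟩ :=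
    Stmt10Aux.main_construct eps heps0 n s L hs1 hL1 hn2 hr
  refine ⟨G, H, w, hsp, u, v, hGadj, hHadj, ?_⟩
  -- arithmetic conclusion
  have hlog1 : 1 ≤ Real.log n := by
    rw [Real.le_log_iff_exp_le hn0R]
    apply le_of_lt
    calc Real.exp 1 < 2.7182818286 := Real.exp_one_lt_d9
      _ ≤ (n : ℝ) := by
        have h9 : (1331 : ℝ) ≤ (n : ℝ) := by exact_mod_cast hn1331
        linarith
  have h23 : (n : ℝ) ^ ((2 : ℝ) / 3) = t ^ (2 : ℕ) := by
    rw [ht, ← Real.rpow_natCast (((n : ℝ)) ^ ((1 : ℝ) / 3)) 2, ← Real.rpow_mul (by positivity)]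
    norm_num
  have ht2 : t ^ (2 : ℕ) ≤ 4 * (s : ℝ) ^ 2 := by
    have h2t : t ≤ 2 * (s : ℝ) := by linarith [hsgt, hs1R]
    calc t ^ (2 : ℕ) ≤ (2 * (s : ℝ)) ^ (2 : ℕ) := pow_le_pow_left₀ ht0.le h2t 2
    _ = 4 * (s : ℝ) ^ 2 := by ring
  have hchain : eps / 16 * (n : ℝ) ^ ((2 : ℝ) / 3) ≤ (L : ℝ) + 1 := by
    rw [h23]
    have hh := mul_le_mul_of_nonneg_left ht2 (by positivity : (0 : ℝ) ≤ eps / 16)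
    linarith [hLgt, hh]
  have hfinal : eps / 16 * (n : ℝ) ^ ((2 : ℝ) / 3) / Real.log n
      ≤ eps / 16 * (n : ℝ) ^ ((2 : ℝ) / 3) := by
    apply div_le_self (by positivity) hlog1
  have hdR : ((L : ℝ)) + 1 ≤ (H.dist u v : ℝ) := by
    have : ((L + 1 : ℕ) : ℝ) ≤ ((H.dist u v : ℕ) : ℝ) := by exact_mod_cast hdist
    push_cast at this
    linarith
  linarith
end
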